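/- arXiv:1108.0760 — 9 statements merged into one kernel-verified Lean document; each statement's English description precedes it below -/
import Mathlib

section
/- Let K₁, K₂ ⊆ ℝⁿ be closed convex cones such that K₁ ∩ K₂ = {0} and the lineality space of K₂ is {0} (i.e., K₂ is pointed). Then there exists s ∈ ℝⁿ such that ⟨s, y⟩ ≤ 0 for all y ∈ K₁ and ⟨s, y⟩ > 0 for all y ∈ K₂ \ {0}. -/
/-!
The convex hull `D` of the unit-sphere slice of `K₂` is compact by Carathéodory's theorem and,
since `K₂` is pointed, does not contain the origin; so it is disjoint from `K₁`. A functional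
strictly separating the closed convex set `K₁` from the compact convex set `D` is bounded above
on the cone `K₁`, hence nonpositive there, and positive on `D`, hence on every ray of `K₂ \ {0}`.
-/

open Matrix Set

section CompactHull

variable {E : Type*} [NormedAddCommGroup E] [NormedSpace ℝ E] [FiniteDimensional ℝ E]

theorem exists_stdSimplex_sum_eq_of_mem_convexHull {s : Set E} {x : E}
    (hx : x ∈ convexHull ℝ s) :
    ∃ w ∈ stdSimplex ℝ (Fin (Module.finrank ℝ E + 1)), ∃ z : Fin (Module.finrank ℝ E + 1) → E,
      (∀ i, z i ∈ s) ∧ ∑ i, w i • z i = x := by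
  obtain ⟨x₀, hx₀⟩ := convexHull_nonempty_iff.1 ⟨x, hx⟩
  -- Carathéodory: an affinely independent family, padded below by zero weights at a point of `s`.
  obtain ⟨ι, _, z, w, hzs, hai, hw₀, hw₁, hwz⟩ := eq_pos_convex_span_of_mem_convexHull hx
  obtain ⟨e⟩ : Nonempty (ι ↪ Fin (Module.finrank ℝ E + 1)) :=
    Function.Embedding.nonempty_of_card_le (by
      simpa using hai.card_le_finrank_succ.trans (Nat.succ_le_succ (Submodule.finrank_le _)))
  classical
  have hw' : ∀ j ∉ range e, Function.extend e w 0 j = 0 := fun j hj =>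
    Function.extend_apply' _ _ _ hj
  refine ⟨Function.extend e w 0, ⟨fun j => ?_, ?_⟩, Function.extend e z fun _ => x₀,
    fun j => ?_, ?_⟩
  · by_cases hj : j ∈ range e
    · obtain ⟨i, rfl⟩ := hj
      simpa [e.injective.extend_apply] using (hw₀ i).le
    · simp [hw' j hj]
  · rw [← hw₁]
    exact (Fintype.sum_of_injective e e.injective _ _ hw' fun i =>
      (e.injective.extend_apply _ _ _).symm).symm
  · by_cases hj : j ∈ range e
    · obtain ⟨i, rfl⟩ := hj
      simpa [e.injective.extend_apply] using hzs (mem_range_self i)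
    · simpa [Function.extend_apply' _ _ _ hj] using hx₀
  · rw [← hwz]
    refine (Fintype.sum_of_injective e e.injective _ _ (fun j hj => ?_) fun i => ?_).symm
    · simp [hw' j hj]
    · simp [e.injective.extend_apply]

theorem isCompact_convexHull {s : Set E} (hs : IsCompact s) : IsCompact (convexHull ℝ s) := by
  have hhull : convexHull ℝ s = (fun p => ∑ i, p.1 i • p.2 i) ''
      (stdSimplex ℝ (Fin (Module.finrank ℝ E + 1)) ×ˢ univ.pi fun _ => s) := by
    refine Subset.antisymm (fun x hx => ?_) ?_
    · obtain ⟨w, hw, z, hz, rfl⟩ := exists_stdSimplex_sum_eq_of_mem_convexHull hx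
      exact ⟨(w, z), ⟨hw, fun i _ => hz i⟩, rfl⟩
    · rintro _ ⟨⟨w, z⟩, ⟨hw, hz⟩, rfl⟩
      exact mem_convexHull_of_exists_fintype w z hw.1 hw.2 (fun i => hz i (mem_univ i)) rfl
  rw [hhull]
  exact ((isCompact_stdSimplex ℝ _).prod (isCompact_univ_pi fun _ => hs)).image (by fun_prop)

end CompactHull

section Cone

variable {E : Type*} [AddCommGroup E] [Module ℝ E] {K : Set E}

theorem add_mem_of_convex_of_smul_mem (hconv : Convex ℝ K)
    (hcone : ∀ x ∈ K, ∀ t : ℝ, 0 ≤ t → t • x ∈ K) {x y : E} (hx : x ∈ K) (hy : y ∈ K) :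
    x + y ∈ K := by
  have hmid := hconv hx hy (by norm_num : (0 : ℝ) ≤ 1 / 2) (by norm_num : (0 : ℝ) ≤ 1 / 2)
    (by norm_num)
  convert hcone _ hmid 2 zero_le_two using 1
  rw [smul_add, smul_smul, smul_smul]
  norm_num

theorem zero_notMem_convexHull_diff_zero (hconv : Convex ℝ K)
    (hcone : ∀ x ∈ K, ∀ t : ℝ, 0 ≤ t → t • x ∈ K) (hpointed : ∀ v ∈ K, -v ∈ K → v = 0) :
    (0 : E) ∉ convexHull ℝ (K \ {0}) := by
  classical
  intro h0
  obtain ⟨ι, _, z, w, hzK, -, hw₀, hw₁, hwz⟩ := eq_pos_convex_span_of_mem_convexHull h0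
  obtain ⟨i₀⟩ : Nonempty ι := by
    by_contra! hι
    simp at hw₁
  have hterm : ∀ i, w i • z i ∈ K := fun i => hcone _ (hzK (mem_range_self i)).1 _ (hw₀ i).le
  have hrest : ∑ i ∈ Finset.univ.erase i₀, w i • z i ∈ K :=
    Finset.sum_induction _ (· ∈ K) (fun _ _ => add_mem_of_convex_of_smul_mem hconv hcone)
      (by simpa using hcone _ (hterm i₀) 0 le_rfl) fun i _ => hterm i
  have hneg : -(w i₀ • z i₀) = ∑ i ∈ Finset.univ.erase i₀, w i • z i := by
    rw [neg_eq_iff_add_eq_zero, Finset.add_sum_erase _ (fun i => w i • z i) (Finset.mem_univ i₀),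
      hwz]
  have := hpointed _ (hterm i₀) (hneg ▸ hrest)
  exact (hzK (mem_range_self i₀)).2 ((smul_eq_zero_iff_right (hw₀ i₀).ne').1 this)

theorem map_nonpos_of_forall_lt_on_cone (hcone : ∀ x ∈ K, ∀ t : ℝ, 0 ≤ t → t • x ∈ K)
    (f : E →ₗ[ℝ] ℝ) {u : ℝ} (hf : ∀ x ∈ K, f x < u) {x : E} (hx : x ∈ K) : f x ≤ 0 := by
  by_contra! hfx
  have := hf _ (hcone x hx (|u| / f x) (by positivity))
  rw [map_smul, smul_eq_mul, div_mul_cancel₀ _ hfx.ne'] at this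
  exact (le_abs_self u).not_gt this

end Cone

theorem exists_strongDual_separating_cones {E : Type*} [NormedAddCommGroup E] [NormedSpace ℝ E]
    [FiniteDimensional ℝ E] {K₁ K₂ : Set E}
    (h₁closed : IsClosed K₁) (h₁conv : Convex ℝ K₁)
    (h₁cone : ∀ x ∈ K₁, ∀ t : ℝ, 0 ≤ t → t • x ∈ K₁)
    (h₂closed : IsClosed K₂) (h₂conv : Convex ℝ K₂)
    (h₂cone : ∀ x ∈ K₂, ∀ t : ℝ, 0 ≤ t → t • x ∈ K₂)
    (hinter : K₁ ∩ K₂ = {0}) (hpointed : ∀ v ∈ K₂, -v ∈ K₂ → v = 0) :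
    ∃ f : StrongDual ℝ E, (∀ y ∈ K₁, f y ≤ 0) ∧ ∀ y ∈ K₂, y ≠ 0 → 0 < f y := by
  have h0 : (0 : E) ∈ K₁ ∩ K₂ := hinter.symm ▸ rfl
  set D := convexHull ℝ (K₂ ∩ Metric.sphere 0 1)
  have hD₂ : D ⊆ K₂ \ {0} := by
    have hS : K₂ ∩ Metric.sphere 0 1 ⊆ K₂ \ {0} := fun y hy =>
      ⟨hy.1, ne_zero_of_mem_unit_sphere ⟨y, hy.2⟩⟩
    refine fun d hd => ⟨convexHull_min inter_subset_left h₂conv hd, ?_⟩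
    rintro rfl
    exact zero_notMem_convexHull_diff_zero h₂conv h₂cone hpointed (convexHull_mono hS hd)
  have hdisj : Disjoint K₁ D := disjoint_left.2 fun d hd₁ hd =>
    (hD₂ hd).2 (hinter.subset ⟨hd₁, (hD₂ hd).1⟩)
  obtain ⟨f, u, v, hfu, huv, hvf⟩ := geometric_hahn_banach_closed_compact h₁conv h₁closed
    (convex_convexHull ℝ _) (isCompact_convexHull ((isCompact_sphere 0 1).inter_left h₂closed))
    hdisj
  have hv : 0 < v := (by simpa using hfu 0 h0.1 : 0 < u).trans huv
  refine ⟨f, fun y hy => map_nonpos_of_forall_lt_on_cone h₁cone f hfu hy, fun y hy hy0 => ?_⟩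
  have hyD : ‖y‖⁻¹ • y ∈ D := subset_convexHull ℝ _
    ⟨h₂cone y hy _ (by positivity), by simp [norm_smul, norm_ne_zero_iff.2 hy0]⟩
  have := hv.trans (hvf _ hyD)
  rw [map_smul, smul_eq_mul] at this
  exact pos_of_mul_pos_right this (by positivity)

/-- Strict separation of a closed convex cone from a pointed closed convex cone
meeting it only at the origin. -/
theorem strict_separation_of_cones {n : ℕ} (K₁ K₂ : Set (Fin n → ℝ))
    (h₁closed : IsClosed K₁) (h₁conv : Convex ℝ K₁)
    (h₁cone : ∀ x ∈ K₁, ∀ t : ℝ, 0 ≤ t → t • x ∈ K₁)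
    (h₂closed : IsClosed K₂) (h₂conv : Convex ℝ K₂)
    (h₂cone : ∀ x ∈ K₂, ∀ t : ℝ, 0 ≤ t → t • x ∈ K₂)
    (hinter : K₁ ∩ K₂ = {0})
    (hpointed : {v | v ∈ K₂ ∧ -v ∈ K₂} = {0}) :
    ∃ s : Fin n → ℝ,
      (∀ y ∈ K₁, s ⬝ᵥ y ≤ 0) ∧ (∀ y ∈ K₂, y ≠ 0 → 0 < s ⬝ᵥ y) := by
  obtain ⟨f, hf₁, hf₂⟩ := exists_strongDual_separating_cones h₁closed h₁conv h₁cone h₂closed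
    h₂conv h₂cone hinter fun v hv hnv => hpointed.subset ⟨hv, hnv⟩
  set s := (dotProductEquiv ℝ (Fin n)).symm (f : Module.Dual ℝ (Fin n → ℝ))
  have hs : ∀ y, s ⬝ᵥ y = f y := fun y => by
    rw [← dotProductEquiv_apply_apply, LinearEquiv.apply_symm_apply]
    rfl
  exact ⟨s, fun y hy => (hs y).trans_le (hf₁ y hy), fun y hy hy0 => (hs y).symm ▸ hf₂ y hy hy0⟩
end

section
/- Let A be an m×n real matrix with columns a₁,…,aₙ. For every index i ∈ {1,…,n}, the following are equivalent: (1) there exists x ∈ ℝⁿ with Ax = 0, x ≥ 0, and xᵢ > 0; (2) every y ∈ ℝᵐ with Aᵀy ≥ 0 satisfies aᵢᵀy = 0. -/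
/-!
(1) ⇒ (2) is complementary slackness: `x ⬝ Aᵀy = Ax ⬝ y = 0` is a sum of nonnegative terms, one of
which is `xᵢ (Aᵀy)ᵢ` with `xᵢ > 0`.

(2) ⇒ (1) is Farkas' lemma for `b = -aᵢ`. The cone spanned by finitely many vectors is closed: by
the Carathéodory reduction it is a finite union of cones on linearly independent vectors, each a
closed linear image of an orthant. Separating `-aᵢ` from it would give a dual solution `y` with
`aᵢᵀy > 0`; hence `-aᵢ = Ac` with `c ≥ 0`, and `x = c + eᵢ` works.
-/

open Matrix

namespace Finsupp

/-- Ratio test: `t` is the least `c a / g a` over `0 < g a`. -/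
lemma exists_nonneg_sub_smul_eq_zero {α : Type*} {c g : α →₀ ℝ} (hc : 0 ≤ c)
    (hg : ∃ a, 0 < g a) : ∃ t : ℝ, ∃ a, 0 < g a ∧ 0 ≤ c - t • g ∧ (c - t • g) a = 0 := by
  classical
  obtain ⟨a₀, ha₀⟩ := hg
  obtain ⟨a, ha, hmin⟩ := (g.support.filter (0 < g ·)).exists_min_image (fun b => c b / g b)
    ⟨a₀, by simp [ha₀.ne', ha₀]⟩
  simp only [Finset.mem_filter, mem_support_iff] at ha hmin
  refine ⟨c a / g a, a, ha.2, fun b => ?_, by simp [div_mul_cancel₀ _ ha.2.ne']⟩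
  have hcb := hc b
  have hca := hc a
  simp only [coe_zero, Pi.zero_apply, coe_sub, coe_smul, Pi.sub_apply, Pi.smul_apply,
    smul_eq_mul, sub_nonneg] at hcb hca ⊢
  rcases le_or_gt (g b) 0 with hgb | hgb
  · exact (mul_nonpos_of_nonneg_of_nonpos (div_nonneg hca ha.2.le) hgb).trans hcb
  · exact (le_div_iff₀ hgb).mp (hmin b ⟨hgb.ne', hgb⟩)

end Finsupp

namespace PointedCone

variable {E : Type*} [AddCommGroup E] [Module ℝ E]

lemma mem_hull_range_iff {ι : Type*} [Fintype ι] {v : ι → E} {x : E} :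
    x ∈ hull ℝ (Set.range v) ↔ ∃ c : ι → ℝ, 0 ≤ c ∧ ∑ i, c i • v i = x := by
  rw [Submodule.mem_span_range_iff_exists_fun]
  constructor
  · rintro ⟨c, rfl⟩
    exact ⟨fun i => c i, fun i => (c i).2, rfl⟩
  · rintro ⟨c, hc, rfl⟩
    exact ⟨fun i => ⟨c i, hc i⟩, rfl⟩

lemma mem_hull_iff_exists_finsupp {s : Set E} {x : E} :
    x ∈ hull ℝ s ↔
      ∃ c ∈ Finsupp.supported ℝ ℝ s, 0 ≤ c ∧ Finsupp.linearCombination ℝ id c = x := by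
  rw [mem_hull_set]
  simp only [Finsupp.mem_supported, Finsupp.linearCombination_apply, id, Finsupp.le_def,
    Finsupp.coe_zero, Pi.zero_apply]

lemma exists_mem_hull_erase_of_not_linearIndepOn [DecidableEq E] {s : Finset E}
    (hs : ¬LinearIndepOn ℝ id (s : Set E)) {x : E} (hx : x ∈ hull ℝ (s : Set E)) :
    ∃ v ∈ s, x ∈ hull ℝ (s.erase v : Set E) := by
  obtain ⟨g, hgs, hg0, hg⟩ : ∃ g ∈ Finsupp.supported ℝ ℝ (s : Set E),
      Finsupp.linearCombination ℝ id g = 0 ∧ ∃ v, 0 < g v := by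
    obtain ⟨g, hgs, hg0, hne⟩ := by simpa [linearIndepOn_iff] using hs
    obtain ⟨v, hv⟩ := Finsupp.ne_iff.mp hne
    rcases hv.lt_or_gt with hneg | hpos
    · exact ⟨-g, Submodule.neg_mem _ hgs, by simp [hg0], v, by simpa using hneg⟩
    · exact ⟨g, hgs, hg0, v, hpos⟩
  obtain ⟨c, hcs, hc0, rfl⟩ := mem_hull_iff_exists_finsupp.mp hx
  obtain ⟨t, v, hgv, hc't, hc'v⟩ := Finsupp.exists_nonneg_sub_smul_eq_zero hc0 hg
  have hvs : v ∈ s := hgs (Finsupp.mem_support_iff.mpr hgv.ne')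
  refine ⟨v, hvs, mem_hull_iff_exists_finsupp.mpr ⟨c - t • g, fun w hw => ?_, hc't, by
    simp [hg0]⟩⟩
  have hsupp : c - t • g ∈ Finsupp.supported ℝ ℝ (s : Set E) :=
    sub_mem hcs (Submodule.smul_mem _ t hgs)
  have hwv : w ≠ v := by rintro rfl; exact Finsupp.mem_support_iff.mp hw hc'v
  simpa [hwv] using hsupp hw

variable [TopologicalSpace E] [IsTopologicalAddGroup E] [ContinuousSMul ℝ E] [T2Space E]

lemma isClosed_hull_of_linearIndepOn {s : Finset E} (hs : LinearIndepOn ℝ id (s : Set E)) :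
    IsClosed (hull ℝ (s : Set E) : Set E) := by
  let L := Fintype.linearCombination ℝ ((↑) : s → E)
  have hL : Topology.IsClosedEmbedding L :=
    L.isClosedEmbedding_of_injective <|
      LinearMap.ker_eq_bot.mpr hs.fintypeLinearCombination_injective
  have himage : (hull ℝ (s : Set E) : Set E) = L '' Set.Ici 0 := by
    ext x
    have hrange : Set.range ((↑) : s → E) = s := Subtype.range_coe
    rw [SetLike.mem_coe, ← hrange, mem_hull_range_iff]
    rfl
  rw [himage]
  exact hL.isClosedMap _ isClosed_Ici

theorem isClosed_hull_finset (s : Finset E) : IsClosed (hull ℝ (s : Set E) : Set E) := by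
  classical
  induction s using Finset.strongInduction with | _ s ih =>
  by_cases hs : LinearIndepOn ℝ id (s : Set E)
  · exact isClosed_hull_of_linearIndepOn hs
  · have hunion : (hull ℝ (s : Set E) : Set E) = ⋃ v ∈ s, hull ℝ (s.erase v : Set E) := by
      refine subset_antisymm (fun x hx => ?_) (Set.iUnion₂_subset fun v _ => ?_)
      · simpa using exists_mem_hull_erase_of_not_linearIndepOn hs hx
      · exact Submodule.span_mono (by simp)
    rw [hunion]
    exact s.finite_toSet.isClosed_biUnion fun v hv => ih _ (Finset.erase_ssubset hv)

theorem isClosed_hull_range {ι : Type*} [Finite ι] (v : ι → E) :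
    IsClosed (hull ℝ (Set.range v) : Set E) := by
  classical
  simpa using isClosed_hull_finset ((Set.finite_range v).toFinset)

end PointedCone

lemma ContinuousLinearMap.apply_eq_dotProduct {κ : Type*} [Fintype κ] [DecidableEq κ]
    (f : StrongDual ℝ (κ → ℝ)) (z : κ → ℝ) : f z = z ⬝ᵥ fun k => f (Pi.single k 1) := by
  conv_lhs => rw [← Finset.univ_sum_single z]
  simp only [map_sum, dotProduct]
  refine Finset.sum_congr rfl fun k _ => ?_
  rw [← smul_eq_mul, ← map_smul, ← Pi.single_smul, smul_eq_mul, mul_one]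

namespace Matrix

variable {κ ι : Type*} [Fintype ι]

lemma mulVec_eq_sum_smul_col {R : Type*} [CommSemiring R] (A : Matrix κ ι R) (x : ι → R) :
    A *ᵥ x = ∑ j, x j • A.col j := by
  ext k
  simp [mulVec, dotProduct, Finset.sum_apply, mul_comm]

lemma mul_eq_zero_of_dotProduct_eq_zero {R : Type*} [Semiring R] [PartialOrder R]
    [IsOrderedRing R] {u v : ι → R} (hu : 0 ≤ u) (hv : 0 ≤ v) (h : u ⬝ᵥ v = 0) (i : ι) :
    u i * v i = 0 :=
  (Finset.sum_eq_zero_iff_of_nonneg fun j _ => mul_nonneg (hu j) (hv j)).mp h i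
    (Finset.mem_univ i)

theorem exists_nonneg_mulVec_eq_iff [Fintype κ] (A : Matrix κ ι ℝ) (b : κ → ℝ) :
    (∃ x, 0 ≤ x ∧ A *ᵥ x = b) ↔ ∀ y, 0 ≤ Aᵀ *ᵥ y → 0 ≤ b ⬝ᵥ y := by
  classical
  constructor
  · rintro ⟨x, hx, rfl⟩ y hy
    rw [dotProduct_comm, dotProduct_mulVec, ← mulVec_transpose]
    exact dotProduct_nonneg_of_nonneg hy hx
  · intro H
    let C : ProperCone ℝ (κ → ℝ) :=
      ⟨PointedCone.hull ℝ (Set.range A.col), PointedCone.isClosed_hull_range _⟩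
    by_contra hb
    have hbC : b ∉ C := fun hbC => by
      obtain ⟨x, hx, hxb⟩ := PointedCone.mem_hull_range_iff.mp hbC
      exact hb ⟨x, hx, by rw [mulVec_eq_sum_smul_col, hxb]⟩
    obtain ⟨f, hfC, hfb⟩ := C.hyperplane_separation_point hbC
    set y : κ → ℝ := fun k => f (Pi.single k 1)
    have hy : 0 ≤ Aᵀ *ᵥ y := fun j => by
      have := hfC _ (PointedCone.subset_hull ⟨j, rfl⟩)
      rwa [f.apply_eq_dotProduct] at this
    have hby := H y hy
    rw [f.apply_eq_dotProduct] at hfb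
    linarith

end Matrix

/-- Farkas-type equivalence: the index `i` admits a primal solution with `xᵢ > 0`
iff every dual solution has `aᵢᵀ y = 0`. -/
theorem primal_pos_iff_dual_zero {m n : ℕ} (A : Matrix (Fin m) (Fin n) ℝ) (i : Fin n) :
    (∃ x : Fin n → ℝ, A *ᵥ x = 0 ∧ (∀ j, 0 ≤ x j) ∧ 0 < x i) ↔
    (∀ y : Fin m → ℝ, (∀ j, 0 ≤ (Aᵀ *ᵥ y) j) → (Aᵀ *ᵥ y) i = 0) := by
  constructor
  · rintro ⟨x, hAx, hx, hxi⟩ y hy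
    have hxy : x ⬝ᵥ Aᵀ *ᵥ y = 0 := by
      rw [dotProduct_mulVec, vecMul_transpose, hAx, zero_dotProduct]
    exact (mul_eq_zero.mp (mul_eq_zero_of_dotProduct_eq_zero hx hy hxy i)).resolve_left hxi.ne'
  · intro H
    obtain ⟨c, hc, hAc⟩ := (exists_nonneg_mulVec_eq_iff A (-A.col i)).mpr fun y hy => by
      rw [neg_dotProduct, show A.col i ⬝ᵥ y = 0 from H y hy, neg_zero]
    refine ⟨c + Pi.single i 1, ?_, add_nonneg hc (Pi.single_nonneg.mpr zero_le_one), ?_⟩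
    · rw [mulVec_add, hAc, mulVec_single_one, neg_add_cancel]
    · simpa using add_pos_of_nonneg_of_pos (hc i) one_pos
end

section
/- Let A be an m×n real matrix. Define B = {i | ∃x: Ax = 0, x ≥ 0, xᵢ > 0} and N = {i | ∃y: Aᵀy ≥ 0, aᵢᵀy > 0}. Then B and N are disjoint and B ∪ N = {1,…,n}; moreover there exist x with Ax = 0, x ≥ 0, xᵢ > 0 for all i ∈ B, and y with Aᵀy ≥ 0, aᵢᵀy > 0 for all i ∈ N. -/
/-!
For a single index `i`, Farkas' lemma applied to `A x = -Aᵢ, x ≥ 0` gives either a nonnegative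
kernel vector `x + eᵢ` that is positive at `i`, or a `y` with `Aᵀy ≥ 0` and `(Aᵀy)ᵢ > 0`.
Complementary slackness, `(Aᵀy) ⬝ x = y ⬝ Ax = 0` with nonnegative summands, rules out both at
once. Both solution sets are closed under addition, so summing the witnesses of all indices
produces a strictly complementary pair.

Farkas' lemma comes from separating `b` from the cone `{A x | x ≥ 0}`, which is closed: if `A` is
injective on a subspace `V` the cone over `V` is the image of a closed set under a closed
embedding, and otherwise pushing a point along a kernel direction until a coordinate vanishes
writes it as a finite union of cones over subspaces of smaller dimension.
-/

open Matrix Module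

theorem AddSubmonoid.exists_forall_pos_of_forall_exists_pos {M ι R : Type*} [AddCommMonoid M]
    [Fintype ι] [AddCommMonoid R] [PartialOrder R] [IsOrderedCancelAddMonoid R]
    (S : AddSubmonoid M) (g : M →+ ι → R) (hg : ∀ s ∈ S, 0 ≤ g s) (T : Set ι)
    (hT : ∀ i ∈ T, ∃ s ∈ S, 0 < g s i) : ∃ s ∈ S, ∀ i ∈ T, 0 < g s i := by
  classical
  have : ∀ i, ∃ s ∈ S, i ∈ T → 0 < g s i := fun i =>
    if hi : i ∈ T then (hT i hi).imp fun _ hs => ⟨hs.1, fun _ => hs.2⟩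
    else ⟨0, S.zero_mem, (absurd · hi)⟩
  choose s hsS hs using this
  refine ⟨∑ i, s i, _root_.sum_mem fun i _ => hsS i, fun i hi => ?_⟩
  rw [map_sum, Finset.sum_apply]
  exact Finset.sum_pos' (fun j _ => hg _ (hsS j) i) ⟨i, Finset.mem_univ i, hs i hi⟩

section ClosedCone

variable {ι E : Type*} [Fintype ι]

lemma exists_nonneg_sub_smul_eq_zero {x g : ι → ℝ} (hx : 0 ≤ x) (hg : ∃ j, 0 < g j) :
    ∃ t : ℝ, ∃ k, 0 < g k ∧ 0 ≤ x - t • g ∧ (x - t • g) k = 0 := by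
  classical
  obtain ⟨k, hk, hmin⟩ := Finset.exists_min_image {j | 0 < g j} (fun j => x j / g j)
    (hg.imp fun j hj => by simpa using hj)
  rw [Finset.mem_filter_univ] at hk
  refine ⟨x k / g k, k, hk, fun j => ?_, by simp [hk.ne']⟩
  have ht : 0 ≤ x k / g k := div_nonneg (hx k) hk.le
  simp only [Pi.zero_apply, Pi.sub_apply, Pi.smul_apply, smul_eq_mul, sub_nonneg]
  rcases lt_or_ge 0 (g j) with hj | hj
  · exact (le_div_iff₀ hj).1 (hmin j (Finset.mem_filter_univ _ |>.2 hj))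
  · exact (mul_nonpos_of_nonneg_of_nonpos ht hj).trans (hx j)

variable [AddCommGroup E] [Module ℝ E] [TopologicalSpace E] [IsTopologicalAddGroup E]
  [ContinuousSMul ℝ E] [T2Space E]

theorem LinearMap.isClosed_image_inter_Ici_zero (f : (ι → ℝ) →ₗ[ℝ] E)
    (V : Submodule ℝ (ι → ℝ)) : IsClosed (f '' (V ∩ Set.Ici 0)) := by
  induction hV : finrank ℝ V using Nat.strong_induction_on generalizing V with
  | _ d ih =>
    by_cases hinj : ∀ x ∈ V, f x = 0 → x = 0
    · have hker : LinearMap.ker (f ∘ₗ V.subtype) = ⊥ :=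
        LinearMap.ker_eq_bot'.2 fun v hv => Subtype.ext (hinj v v.2 hv)
      rw [← Subtype.image_preimage_coe, ← Set.image_comp]
      exact (LinearMap.isClosedEmbedding_of_injective hker).isClosedMap _
        (isClosed_Ici.preimage continuous_subtype_val)
    obtain ⟨g, hgV, hfg, hg⟩ : ∃ g ∈ V, f g = 0 ∧ ∃ j, 0 < g j := by
      push Not at hinj
      obtain ⟨g, hgV, hfg, hg0⟩ := hinj
      obtain ⟨j, hj⟩ := Function.ne_iff.1 hg0
      rcases hj.lt_or_gt with hj | hj
      · exact ⟨-g, V.neg_mem hgV, by simp [hfg], j, by simpa using hj⟩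
      · exact ⟨g, hgV, hfg, j, hj⟩
    let W (k : ι) : Submodule ℝ (ι → ℝ) := V ⊓ LinearMap.ker (LinearMap.proj k)
    have hsplit : f '' (V ∩ Set.Ici 0) = ⋃ k ∈ {k | 0 < g k}, f '' (W k ∩ Set.Ici 0) := by
      refine subset_antisymm ?_ (Set.iUnion₂_subset fun k _ => Set.image_mono
        (Set.inter_subset_inter_left _ inf_le_left))
      rintro _ ⟨x, ⟨hxV, hx⟩, rfl⟩
      obtain ⟨t, k, hk, hxt, hxtk⟩ := exists_nonneg_sub_smul_eq_zero hx hg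
      refine Set.mem_biUnion hk ⟨x - t • g, ⟨⟨V.sub_mem hxV (V.smul_mem t hgV), hxtk⟩, hxt⟩, ?_⟩
      simp [hfg]
    rw [hsplit]
    refine (Set.toFinite _).isClosed_biUnion fun k hk => ih _ ?_ _ rfl
    rw [← hV]
    refine Submodule.finrank_lt_finrank_of_lt (lt_of_le_of_ne inf_le_left fun h => ?_)
    exact hk.ne' ((SetLike.ext_iff.1 h g).2 hgV).2

theorem LinearMap.isClosed_image_Ici_zero (f : (ι → ℝ) →ₗ[ℝ] E) : IsClosed (f '' Set.Ici 0) := by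
  simpa using f.isClosed_image_inter_Ici_zero ⊤

end ClosedCone

namespace Matrix

variable {ι κ : Type*} [Fintype ι] [Fintype κ]

theorem exists_nonneg_mulVec_eq_or_exists_transpose_mulVec_nonneg (M : Matrix κ ι ℝ)
    (b : κ → ℝ) : (∃ x, 0 ≤ x ∧ M *ᵥ x = b) ∨ ∃ y, 0 ≤ Mᵀ *ᵥ y ∧ y ⬝ᵥ b < 0 := by
  classical
  refine or_iff_not_imp_left.2 fun hb => ?_
  let C : ProperCone ℝ (κ → ℝ) :=
    ⟨(PointedCone.positive ℝ (ι → ℝ)).map M.mulVecLin, M.mulVecLin.isClosed_image_Ici_zero⟩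
  obtain ⟨φ, hφC, hφb⟩ :=
    C.hyperplane_separation_point (x₀ := b) fun ⟨x, hx, hMx⟩ => hb ⟨x, hx, hMx⟩
  set y := (dotProductEquiv ℝ κ).symm φ
  have hy : ∀ z, y ⬝ᵥ z = φ z := fun z =>
    congrArg (· z) ((dotProductEquiv ℝ κ).apply_symm_apply φ.toLinearMap)
  refine ⟨y, fun j => ?_, (hy b).trans_lt hφb⟩
  have hcol : M *ᵥ Pi.single j 1 ∈ C := ⟨_, Pi.single_nonneg.2 zero_le_one, rfl⟩
  rw [mulVec_transpose, ← dotProduct_single_one (y ᵥ* M), ← dotProduct_mulVec, hy]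
  exact hφC _ hcol

theorem exists_mulVec_eq_zero_pos_or_exists_transpose_mulVec_pos (A : Matrix κ ι ℝ) (i : ι) :
    (∃ x, A *ᵥ x = 0 ∧ 0 ≤ x ∧ 0 < x i) ∨ ∃ y, 0 ≤ Aᵀ *ᵥ y ∧ 0 < (Aᵀ *ᵥ y) i := by
  classical
  rcases A.exists_nonneg_mulVec_eq_or_exists_transpose_mulVec_nonneg (-A.col i) with
    ⟨x, hx, hAx⟩ | ⟨y, hy, hyi⟩
  · refine .inl ⟨x + Pi.single i 1, ?_, add_nonneg hx (Pi.single_nonneg.2 zero_le_one), ?_⟩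
    · rw [mulVec_add, hAx, mulVec_single_one, neg_add_cancel]
    · simpa using add_pos_of_nonneg_of_pos (hx i) one_pos
  · refine .inr ⟨y, hy, ?_⟩
    rwa [dotProduct_neg, neg_lt_zero, ← mulVec_single_one, dotProduct_mulVec,
      dotProduct_single_one, ← mulVec_transpose] at hyi

theorem transpose_mulVec_apply_mul_eq_zero {A : Matrix κ ι ℝ} {x : ι → ℝ} {y : κ → ℝ}
    (hAx : A *ᵥ x = 0) (hx : 0 ≤ x) (hy : 0 ≤ Aᵀ *ᵥ y) (i : ι) : (Aᵀ *ᵥ y) i * x i = 0 := by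
  have : (Aᵀ *ᵥ y) ⬝ᵥ x = 0 := by
    rw [mulVec_transpose, ← dotProduct_mulVec, hAx, dotProduct_zero]
  exact (Finset.sum_eq_zero_iff_of_nonneg fun j _ => mul_nonneg (hy j) (hx j)).1 this i
    (Finset.mem_univ i)

end Matrix

/-- Goldman–Tucker theorem: the index sets `B` and `N` partition `{1,…,n}` and
there are strictly complementary solutions realizing them. -/
theorem goldman_tucker {m n : ℕ} (A : Matrix (Fin m) (Fin n) ℝ) :
    let B : Set (Fin n) :=
      {i | ∃ x : Fin n → ℝ, A *ᵥ x = 0 ∧ (∀ j, 0 ≤ x j) ∧ 0 < x i}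
    let N : Set (Fin n) :=
      {i | ∃ y : Fin m → ℝ, (∀ j, 0 ≤ (Aᵀ *ᵥ y) j) ∧ 0 < (Aᵀ *ᵥ y) i}
    Disjoint B N ∧ B ∪ N = Set.univ ∧
      (∃ x : Fin n → ℝ, A *ᵥ x = 0 ∧ (∀ j, 0 ≤ x j) ∧ ∀ i ∈ B, 0 < x i) ∧
      (∃ y : Fin m → ℝ, (∀ j, 0 ≤ (Aᵀ *ᵥ y) j) ∧ ∀ i ∈ N, 0 < (Aᵀ *ᵥ y) i) := by
  intro B N
  refine ⟨Set.disjoint_left.2 ?_, Set.eq_univ_of_forall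
    A.exists_mulVec_eq_zero_pos_or_exists_transpose_mulVec_pos, ?_, ?_⟩
  · rintro i ⟨x, hAx, hx, hxi⟩ ⟨y, hy, hyi⟩
    exact (mul_pos hyi hxi).ne' (transpose_mulVec_apply_mul_eq_zero hAx hx hy i)
  · obtain ⟨x, ⟨hAx, hx⟩, hxB⟩ :=
      ((LinearMap.ker A.mulVecLin).toAddSubmonoid ⊓ AddSubmonoid.nonneg _)
        |>.exists_forall_pos_of_forall_exists_pos (.id _) (fun _ h => h.2) B
          fun _ ⟨x, hAx, hx, hxi⟩ => ⟨x, ⟨hAx, hx⟩, hxi⟩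
    exact ⟨x, hAx, hx, hxB⟩
  · exact ((AddSubmonoid.nonneg _).comap Aᵀ.mulVecLin).exists_forall_pos_of_forall_exists_pos
      Aᵀ.mulVecLin.toAddMonoidHom (fun _ h => h) N fun _ h => h
end

section
/- Let A be an m×n real matrix with columns a₁,…,aₙ. For every index i, there exists x with Ax = 0, x ≥ 0, and xᵢ > 0 if and only if aᵢ belongs to the lineality space of the cone A(ℝⁿ₊) = {Ax | x ≥ 0}. -/
open Matrix

/-!
If `f x = 0` with `x ≥ 0` and `xᵢ > 0`, then rescaling to `xᵢ = 1` and removing `eᵢ` writes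
`-f eᵢ` as the image of a nonnegative vector; conversely, `-f eᵢ = f y` with `y ≥ 0` gives the
kernel vector `y + eᵢ`. Since `f eᵢ` always lies in the cone, this is exactly lineality.
-/

namespace PointedCone

variable {𝕜 ι N : Type*} [Field 𝕜] [LinearOrder 𝕜] [IsStrictOrderedRing 𝕜] [DecidableEq ι]
  [AddCommGroup N] [Module 𝕜 N]

theorem map_single_one_mem_map_positive (f : (ι → 𝕜) →ₗ[𝕜] N) (i : ι) :
    f (Pi.single i 1) ∈ (positive 𝕜 (ι → 𝕜)).map f :=
  mem_map.2 ⟨Pi.single i 1, Pi.single_nonneg.2 zero_le_one, rfl⟩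

theorem neg_map_single_one_mem_map_positive_iff (f : (ι → 𝕜) →ₗ[𝕜] N) (i : ι) :
    -f (Pi.single i 1) ∈ (positive 𝕜 (ι → 𝕜)).map f ↔ ∃ x, f x = 0 ∧ 0 ≤ x ∧ 0 < x i := by
  constructor
  · intro h
    obtain ⟨y, hy : 0 ≤ y, hfy⟩ := mem_map.1 h
    refine ⟨y + Pi.single i 1, by simp [hfy], add_nonneg hy (Pi.single_nonneg.2 zero_le_one), ?_⟩
    simpa using add_pos_of_nonneg_of_pos (hy i) zero_lt_one
  · rintro ⟨x, hfx, hx, hxi⟩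
    refine ⟨(x i)⁻¹ • x - Pi.single i 1, fun j => ?_, by simp [hfx]⟩
    rcases eq_or_ne j i with rfl | hji
    · simp [hxi.ne']
    · simpa [hji] using mul_nonneg (inv_nonneg.2 hxi.le) (hx j)

theorem map_single_one_mem_lineal_iff (f : (ι → 𝕜) →ₗ[𝕜] N) (i : ι) :
    f (Pi.single i 1) ∈ ((positive 𝕜 (ι → 𝕜)).map f).lineal ↔
      ∃ x, f x = 0 ∧ 0 ≤ x ∧ 0 < x i := by
  rw [mem_lineal, neg_map_single_one_mem_map_positive_iff]
  exact and_iff_right (map_single_one_mem_map_positive f i)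

end PointedCone

/-- Geometric characterization of `B`: index `i` admits a primal solution with
`xᵢ > 0` iff the column `aᵢ` lies in the lineality space of the cone `A(ℝⁿ₊)`. -/
theorem primal_pos_iff_col_in_lineality {m n : ℕ}
    (A : Matrix (Fin m) (Fin n) ℝ) (i : Fin n) :
    let C : Set (Fin m → ℝ) := {z | ∃ x : Fin n → ℝ, (∀ j, 0 ≤ x j) ∧ z = A *ᵥ x}
    (∃ x : Fin n → ℝ, A *ᵥ x = 0 ∧ (∀ j, 0 ≤ x j) ∧ 0 < x i) ↔
      (fun k => A k i) ∈ {v | v ∈ C ∧ -v ∈ C} := by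
  intro C
  have hC : C = (PointedCone.positive ℝ (Fin n → ℝ)).map A.mulVecLin := by
    ext z
    simp only [C, Set.mem_ofPred_eq, SetLike.mem_coe, PointedCone.mem_map,
      PointedCone.mem_positive, Pi.le_def, Pi.zero_apply, mulVecLin_apply, eq_comm]
  have hcol : (fun k => A k i) = A.mulVecLin (Pi.single i 1) := (mulVec_single_one A i).symm
  rw [hC, hcol]
  exact (PointedCone.map_single_one_mem_lineal_iff A.mulVecLin i).symm
end

section
/- Let A be an m×n real matrix with columns a₁,…,aₙ. For every index i, there exists y ∈ ℝᵐ with Aᵀy ≥ 0 and aᵢᵀy > 0 if and only if aᵢ does not belong to the lineality space of the cone A(ℝⁿ₊). -/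
/-!
The column `aᵢ` always lies in the cone `C = A(ℝⁿ₊)`, so it lies in the lineality space iff
`-aᵢ ∈ C`, and by Farkas' lemma `-aᵢ ∉ C` iff some `y` has `Aᵀy ≥ 0` and `-aᵢᵀy < 0`.
Farkas' lemma follows by separating a point from the closed convex cone `C`. The cone is closed
by induction on the number of generators: if they are linearly dependent, moving a conic
combination along a kernel vector until a coefficient vanishes writes the cone as a finite union
of cones with fewer generators; if they are independent, the cone is the image of the closed
orthant under a closed embedding.
-/

open Matrix

variable {ι E : Type*} [AddCommGroup E] [Module ℝ E]

theorem exists_nonneg_sub_smul_eq_zero_s5 [Fintype ι] {c d : ι → ℝ} (hc : 0 ≤ c)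
    (hd : ∃ j, 0 < d j) : ∃ t : ℝ, ∃ j, 0 ≤ c - t • d ∧ (c - t • d) j = 0 := by
  classical
  obtain ⟨j, hj, hmin⟩ := Finset.exists_min_image {j | 0 < d j} (fun j => c j / d j)
    (by simpa [Finset.Nonempty] using hd)
  rw [Finset.mem_filter_univ] at hj
  refine ⟨c j / d j, j, fun l => ?_, by simp [hj.ne']⟩
  rw [Pi.zero_apply, Pi.sub_apply, Pi.smul_apply, smul_eq_mul, sub_nonneg]
  rcases le_or_gt (d l) 0 with hl | hl
  · exact (mul_nonpos_of_nonneg_of_nonpos (div_nonneg (hc j) hj.le) hl).trans (hc l)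
  · exact (le_div_iff₀ hl).mp (hmin l ((Finset.mem_filter_univ l).mpr hl))

theorem image_extendByZero_nonneg (j : ι) :
    Function.ExtendByZero.linearMap ℝ (Subtype.val : {l // l ≠ j} → ι) '' {c | 0 ≤ c} =
      {c | 0 ≤ c ∧ c j = 0} := by
  ext c
  constructor
  · rintro ⟨c, hc, rfl⟩
    refine ⟨fun l => ?_, ?_⟩
    · by_cases hl : l = j
      · simp [hl, Function.extend_apply']
      · simpa [Subtype.val_injective.extend_apply (g := c) (a := ⟨l, hl⟩)] using hc ⟨l, hl⟩
    · simp [Function.extend_apply']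
  · rintro ⟨hc, hcj⟩
    refine ⟨fun l => c l, fun l => hc l, funext fun l => ?_⟩
    by_cases hl : l = j
    · subst hl; simp [hcj, Function.extend_apply']
    · simpa using Subtype.val_injective.extend_apply (fun l : {l // l ≠ j} => c l) 0 ⟨l, hl⟩

theorem LinearMap.image_nonneg_eq_iUnion [Fintype ι] (f : (ι → ℝ) →ₗ[ℝ] E) {d : ι → ℝ}
    (hd : f d = 0) (hpos : ∃ j, 0 < d j) :
    f '' {c | 0 ≤ c} = ⋃ j, f '' {c | 0 ≤ c ∧ c j = 0} := by
  refine subset_antisymm ?_ (Set.iUnion_subset fun j => Set.image_mono fun c hc => hc.1)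
  rintro _ ⟨c, hc, rfl⟩
  obtain ⟨t, j, hnonneg, hzero⟩ := exists_nonneg_sub_smul_eq_zero_s5 hc hpos
  exact Set.mem_iUnion.mpr ⟨j, c - t • d, ⟨hnonneg, hzero⟩, by simp [hd]⟩

variable [TopologicalSpace E] [IsTopologicalAddGroup E] [ContinuousSMul ℝ E] [T2Space E]

theorem LinearMap.isClosed_image_nonneg [Fintype ι] (f : (ι → ℝ) →ₗ[ℝ] E) :
    IsClosed (f '' {c | 0 ≤ c}) := by
  induction h : Fintype.card ι using Nat.strong_induction_on generalizing ι with
  | _ k ih =>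
  classical
  by_cases hinj : LinearMap.ker f = ⊥
  · exact (LinearMap.isClosedEmbedding_of_injective hinj).isClosedMap _ isClosed_Ici
  obtain ⟨d, hd, j, hj⟩ : ∃ d, f d = 0 ∧ ∃ j, 0 < d j := by
    obtain ⟨v, hv, hv0⟩ := (Submodule.ne_bot_iff _).mp hinj
    obtain ⟨j, hj⟩ := Function.ne_iff.mp hv0
    rcases hj.lt_or_gt with hj | hj
    · exact ⟨-v, by simpa using hv, j, by simpa using hj⟩
    · exact ⟨v, hv, j, hj⟩
  rw [f.image_nonneg_eq_iUnion hd ⟨j, hj⟩]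
  refine isClosed_iUnion_of_finite fun j => ?_
  rw [← image_extendByZero_nonneg, ← Set.image_comp]
  exact ih _ (h ▸ Fintype.card_subtype_lt (x := j) (by simp))
    (f ∘ₗ Function.ExtendByZero.linearMap ℝ Subtype.val) rfl

theorem LinearMap.exists_strongDual_of_notMem_image_nonneg [LocallyConvexSpace ℝ E] [Fintype ι]
    (f : (ι → ℝ) →ₗ[ℝ] E) {b : E} (hb : b ∉ f '' {c | 0 ≤ c}) :
    ∃ φ : StrongDual ℝ E, (∀ c, 0 ≤ c → 0 ≤ φ (f c)) ∧ φ b < 0 := by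
  let K : ProperCone ℝ E := ⟨(PointedCone.positive ℝ (ι → ℝ)).map f, f.isClosed_image_nonneg⟩
  obtain ⟨φ, hK, hφb⟩ := K.hyperplane_separation_point (x₀ := b) hb
  exact ⟨φ, fun c hc => hK _ ⟨c, hc, rfl⟩, hφb⟩

theorem Matrix.exists_nonneg_mulVec_eq_iff_s5 {m n : Type*} [Fintype m] [Fintype n]
    (A : Matrix m n ℝ) (b : m → ℝ) :
    (∃ x, 0 ≤ x ∧ A *ᵥ x = b) ↔ ∀ y, 0 ≤ Aᵀ *ᵥ y → 0 ≤ b ⬝ᵥ y := by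
  classical
  constructor
  · rintro ⟨x, hx, rfl⟩ y hy
    rw [dotProduct_comm, dotProduct_mulVec, ← mulVec_transpose]
    exact dotProduct_nonneg_of_nonneg hy hx
  · intro h
    by_contra hb
    obtain ⟨φ, hφA, hφb⟩ :=
      A.mulVecLin.exists_strongDual_of_notMem_image_nonneg (b := b) (by simpa using hb)
    set y := (dotProductEquiv ℝ m).symm φ.toLinearMap
    have hφ (v : m → ℝ) : φ v = y ⬝ᵥ v :=
      (LinearMap.congr_fun ((dotProductEquiv ℝ m).apply_symm_apply φ.toLinearMap) v).symm
    refine hφb.not_ge ?_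
    rw [hφ, dotProduct_comm]
    refine h y fun j => ?_
    have hj := hφA (Pi.single j 1) (by simp)
    rwa [hφ, mulVecLin_apply, mulVec_single_one, dotProduct_comm] at hj

/-- Geometric characterization of `N`: index `i` admits a dual solution with
`aᵢᵀ y > 0` iff the column `aᵢ` does not lie in the lineality space of `A(ℝⁿ₊)`. -/
theorem dual_pos_iff_col_not_in_lineality {m n : ℕ}
    (A : Matrix (Fin m) (Fin n) ℝ) (i : Fin n) :
    let C : Set (Fin m → ℝ) := {z | ∃ x : Fin n → ℝ, (∀ j, 0 ≤ x j) ∧ z = A *ᵥ x}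
    (∃ y : Fin m → ℝ, (∀ j, 0 ≤ (Aᵀ *ᵥ y) j) ∧ 0 < (Aᵀ *ᵥ y) i) ↔
      (fun k => A k i) ∉ {v | v ∈ C ∧ -v ∈ C} := by
  intro C
  have hmem (z : Fin m → ℝ) : z ∈ C ↔ ∃ x, 0 ≤ x ∧ A *ᵥ x = z := by
    simp only [C, Set.mem_ofPred_eq, Pi.le_def, Pi.zero_apply, eq_comm]
  have hcol : (fun k => A k i) ∈ C :=
    (hmem _).mpr ⟨Pi.single i 1, by simp, A.mulVec_single_one i⟩
  have hneg : -(fun k => A k i) ∈ C ↔ ∀ y, 0 ≤ Aᵀ *ᵥ y → (Aᵀ *ᵥ y) i ≤ 0 := by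
    rw [hmem, A.exists_nonneg_mulVec_eq_iff_s5]
    simp only [neg_dotProduct, neg_nonneg]
    rfl
  simp only [Set.mem_ofPred_eq, hcol, true_and, hneg, Pi.le_def, Pi.zero_apply]
  push Not
  rfl
end

section
/- Let K = K₁ × ⋯ × K_r ⊆ ℝⁿ be a product of regular (closed, convex, pointed, full-dimensional) cones Kᵢ ⊆ ℝ^{nᵢ}, and let A = [A₁ ⋯ A_r] ∈ ℝ^{m×n} with blocks Aᵢ ∈ ℝ^{m×nᵢ}. For each i, the following are equivalent: (1) there exists x ∈ K with Ax = 0 and xᵢ ∈ int Kᵢ; (2) the relative interior of AᵢKᵢ intersects the lineality space of AK. -/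
/-!
The relative interior of `AᵢKᵢ` is `Aᵢ(int Kᵢ)`: a point `z` of the relative interior can be
pushed a little beyond itself, away from the image `p` of an interior point of `Kᵢ`, while staying
in `AᵢKᵢ`, so `z` lies on an open segment from `p` into `AᵢKᵢ`, and such segments come from
interior points of `Kᵢ`. With this, if `∑ Aⱼxⱼ = 0` and `xᵢ ∈ int Kᵢ`, then `z = Aᵢxᵢ` and
`-z = ∑_{j ≠ i} Aⱼxⱼ` both lie in `AK`. Conversely, if `z = Aᵢw` with `w ∈ int Kᵢ` and
`-z = ∑ Aⱼyⱼ` with `y ∈ K`, then replacing `yᵢ` by `w + yᵢ ∈ int Kᵢ` gives a solution of `Ax = 0`.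
-/

open Matrix Set Function Filter Topology

theorem Fintype.sum_apply_update {ι : Type*} [Fintype ι] [DecidableEq ι] {E : ι → Type*}
    {F : Type*} [AddCommGroup F] (f : ∀ j, E j → F) (x : ∀ j, E j) (i : ι) (v : E i) :
    ∑ j, f j (update x i v j) = ∑ j, f j (x j) - f i (x i) + f i v := by
  simp_rw [apply_update f x i v]
  rw [Finset.sum_update_of_mem (Finset.mem_univ i),
    Finset.sum_eq_add_sum_sdiff_singleton_of_mem (Finset.mem_univ i) fun j => f j (x j)]
  abel

section Cone

variable {E : Type*} [AddCommGroup E] [Module ℝ E] {K : Set E}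

theorem zero_mem_of_smul_mem (hsmul : ∀ x ∈ K, ∀ t : ℝ, 0 ≤ t → t • x ∈ K) (hK : K.Nonempty) :
    (0 : E) ∈ K := by
  obtain ⟨p, hp⟩ := hK
  simpa using hsmul p hp 0 le_rfl

theorem add_mem_of_convex_of_smul_mem_s6 (hconv : Convex ℝ K)
    (hsmul : ∀ x ∈ K, ∀ t : ℝ, 0 ≤ t → t • x ∈ K) {u v : E} (hu : u ∈ K) (hv : v ∈ K) :
    u + v ∈ K := by
  have hmid := hconv hu hv (by norm_num : (0 : ℝ) ≤ 1 / 2) (by norm_num : (0 : ℝ) ≤ 1 / 2)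
    (by norm_num)
  simpa [smul_add, smul_smul] using hsmul _ hmid 2 zero_le_two

theorem add_mem_interior_of_convex_of_smul_mem [TopologicalSpace E] [IsTopologicalAddGroup E]
    (hconv : Convex ℝ K) (hsmul : ∀ x ∈ K, ∀ t : ℝ, 0 ≤ t → t • x ∈ K) {u v : E}
    (hu : u ∈ interior K) (hv : v ∈ K) : u + v ∈ interior K := by
  refine interior_mono ?_ (subset_interior_add_left (add_mem_add hu hv))
  rintro _ ⟨a, ha, b, hb, rfl⟩
  exact add_mem_of_convex_of_smul_mem_s6 hconv hsmul ha hb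

end Cone

section IntrinsicInterior

variable {E F : Type*} [NormedAddCommGroup E] [NormedSpace ℝ E]
  [NormedAddCommGroup F] [NormedSpace ℝ F]

theorem exists_mem_openSegment_of_mem_intrinsicInterior {D : Set F} {z p : F}
    (hz : z ∈ intrinsicInterior ℝ D) (hp : p ∈ D) : ∃ c ∈ D, z ∈ openSegment ℝ p c := by
  obtain ⟨y, hy, rfl⟩ := mem_intrinsicInterior.1 hz
  let ℓ : ℝ → affineSpan ℝ D := fun t =>
    ⟨AffineMap.lineMap p y t, AffineMap.lineMap_mem t (subset_affineSpan ℝ D hp) y.2⟩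
  have hℓ : Continuous ℓ := AffineMap.lineMap_continuous.subtype_mk _
  have hℓ1 : ℓ 1 = y := Subtype.ext (AffineMap.lineMap_apply_one _ _)
  have hnhds : ℓ ⁻¹' (Subtype.val ⁻¹' D) ∈ 𝓝 (1 : ℝ) :=
    hℓ.continuousAt.preimage_mem_nhds (hℓ1 ▸ mem_interior_iff_mem_nhds.1 hy)
  obtain ⟨t, htD, ht1⟩ := Filter.nonempty_of_mem
    (inter_mem (mem_nhdsWithin_of_mem_nhds hnhds) (self_mem_nhdsWithin : Ioi 1 ∈ 𝓝[>] (1 : ℝ)))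
  have ht0 : 0 < t := zero_lt_one.trans ht1
  refine ⟨_, htD, ?_⟩
  rw [openSegment_eq_image_lineMap]
  refine ⟨t⁻¹, ⟨inv_pos.2 ht0, inv_lt_one_of_one_lt₀ ht1⟩, ?_⟩
  simp [ℓ, inv_mul_cancel₀ ht0.ne']

theorem intrinsicInterior_image_subset_image_interior (f : E →ₗ[ℝ] F) {C : Set E}
    (hC : Convex ℝ C) (hne : (interior C).Nonempty) :
    intrinsicInterior ℝ (f '' C) ⊆ f '' interior C := by
  obtain ⟨w, hw⟩ := hne
  intro z hz
  obtain ⟨_, ⟨u, hu, rfl⟩, hzu⟩ :=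
    exists_mem_openSegment_of_mem_intrinsicInterior hz (mem_image_of_mem f (interior_subset hw))
  obtain ⟨v, hv, rfl⟩ : z ∈ f.toAffineMap '' openSegment ℝ w u := by rwa [image_openSegment]
  exact mem_image_of_mem f (hC.openSegment_interior_self_subset_interior hw hu hv)

theorem image_interior_subset_intrinsicInterior_image [FiniteDimensional ℝ E] (f : E →ₗ[ℝ] F)
    (C : Set E) : f '' interior C ⊆ intrinsicInterior ℝ (f '' C) := by
  let g := f.rangeRestrict
  let e := (Submodule.subtypeₗᵢ (R' := ℝ) (LinearMap.range f)).toAffineIsometry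
  have hf : ∀ s, f '' s = e '' (g '' s) := fun s => by rw [image_image]; rfl
  have hg : g '' interior C ⊆ interior (g '' C) :=
    interior_maximal (image_mono interior_subset)
      (g.isOpenMap_of_finiteDimensional f.surjective_rangeRestrict _ isOpen_interior)
  rw [hf, hf, AffineIsometry.intrinsicInterior_image]
  exact image_mono (hg.trans (interior_subset_intrinsicInterior (𝕜 := ℝ)))

theorem intrinsicInterior_image_eq_image_interior [FiniteDimensional ℝ E] (f : E →ₗ[ℝ] F)
    {C : Set E} (hC : Convex ℝ C) (hne : (interior C).Nonempty) :
    intrinsicInterior ℝ (f '' C) = f '' interior C :=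
  (intrinsicInterior_image_subset_image_interior f hC hne).antisymm
    (image_interior_subset_intrinsicInterior_image f C)

end IntrinsicInterior

section Multifold

variable {ι : Type*} [Fintype ι] [DecidableEq ι] {E : ι → Type*}
  [∀ j, NormedAddCommGroup (E j)] [∀ j, NormedSpace ℝ (E j)] [∀ j, FiniteDimensional ℝ (E j)]
  {F : Type*} [NormedAddCommGroup F] [NormedSpace ℝ F]

theorem exists_sum_eq_zero_mem_interior_iff (f : ∀ j, E j →ₗ[ℝ] F) (K : ∀ j, Set (E j))
    (hconv : ∀ j, Convex ℝ (K j)) (hsmul : ∀ j, ∀ x ∈ K j, ∀ t : ℝ, 0 ≤ t → t • x ∈ K j)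
    (hne : ∀ j, (interior (K j)).Nonempty) (i : ι) :
    let S : Set F := {z | ∃ x : ∀ j, E j, (∀ j, x j ∈ K j) ∧ z = ∑ j, f j (x j)}
    (∃ x : ∀ j, E j, (∀ j, x j ∈ K j) ∧ ∑ j, f j (x j) = 0 ∧ x i ∈ interior (K i)) ↔
      (intrinsicInterior ℝ (f i '' K i) ∩ {z | z ∈ S ∧ -z ∈ S}).Nonempty := by
  intro S
  have hzero j : (0 : E j) ∈ K j :=
    zero_mem_of_smul_mem (hsmul j) ((hne j).mono interior_subset)
  rw [intrinsicInterior_image_eq_image_interior (f i) (hconv i) (hne i)]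
  constructor
  · rintro ⟨x, hxK, hsum, hxi⟩
    refine ⟨f i (x i), mem_image_of_mem _ hxi, ⟨update 0 i (x i), ?_, ?_⟩,
      ⟨update x i 0, ?_, ?_⟩⟩
    · exact (forall_update_iff _ fun j v => v ∈ K j).2 ⟨hxK i, fun j _ => hzero j⟩
    · simp [Fintype.sum_apply_update]
    · exact (forall_update_iff _ fun j v => v ∈ K j).2 ⟨hzero i, fun j _ => hxK j⟩
    · simp [Fintype.sum_apply_update, hsum]
  · rintro ⟨_, ⟨w, hw, rfl⟩, -, y, hyK, hy⟩
    have hwy : w + y i ∈ interior (K i) :=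
      add_mem_interior_of_convex_of_smul_mem (hconv i) (hsmul i) hw (hyK i)
    refine ⟨update y i (w + y i), ?_, ?_, by simpa using hwy⟩
    · exact (forall_update_iff _ fun j v => v ∈ K j).2 ⟨interior_subset hwy, fun j _ => hyK j⟩
    · rw [Fintype.sum_apply_update, ← hy, map_add]
      abel

end Multifold

theorem multifold_B_iff_general {r m : ℕ} (n : Fin r → ℕ)
    (K : ∀ i, Set (Fin (n i) → ℝ)) (A : ∀ i, Matrix (Fin m) (Fin (n i)) ℝ)
    (hK : ∀ i, IsClosed (K i) ∧ Convex ℝ (K i) ∧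
      (∀ x ∈ K i, ∀ t : ℝ, 0 ≤ t → t • x ∈ K i) ∧
      (∀ x ∈ K i, -x ∈ K i → x = 0) ∧ (interior (K i)).Nonempty)
    (i : Fin r) :
    let AK : Set (Fin m → ℝ) :=
      {z | ∃ x : ∀ j, Fin (n j) → ℝ, (∀ j, x j ∈ K j) ∧ z = ∑ j, (A j) *ᵥ x j}
    (∃ x : ∀ j, Fin (n j) → ℝ,
        (∀ j, x j ∈ K j) ∧ (∑ j, (A j) *ᵥ x j) = 0 ∧ x i ∈ interior (K i)) ↔
    (intrinsicInterior ℝ ((fun v => (A i) *ᵥ v) '' K i) ∩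
      {z | z ∈ AK ∧ -z ∈ AK}).Nonempty :=
  exists_sum_eq_zero_mem_interior_iff (fun j => (A j).mulVecLin) K (fun j => (hK j).2.1)
    (fun j => (hK j).2.2.1) (fun j => (hK j).2.2.2.2) i

/-- Characterization of the set `B` for multifold conic systems:
`i ∈ B` iff `ri (AᵢKᵢ)` meets the lineality space of `AK`. -/
theorem multifold_B_iff {r m : ℕ} (n : Fin r → ℕ) (hn : ∀ i, 0 < n i)
    (K : ∀ i, Set (Fin (n i) → ℝ)) (A : ∀ i, Matrix (Fin m) (Fin (n i)) ℝ)
    (hK : ∀ i, IsClosed (K i) ∧ Convex ℝ (K i) ∧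
      (∀ x ∈ K i, ∀ t : ℝ, 0 ≤ t → t • x ∈ K i) ∧
      (∀ x ∈ K i, -x ∈ K i → x = 0) ∧ (interior (K i)).Nonempty)
    (i : Fin r) :
    let AK : Set (Fin m → ℝ) :=
      {z | ∃ x : ∀ j, Fin (n j) → ℝ, (∀ j, x j ∈ K j) ∧ z = ∑ j, (A j) *ᵥ x j}
    (∃ x : ∀ j, Fin (n j) → ℝ,
        (∀ j, x j ∈ K j) ∧ (∑ j, (A j) *ᵥ x j) = 0 ∧ x i ∈ interior (K i)) ↔
    (intrinsicInterior ℝ ((fun v => (A i) *ᵥ v) '' K i) ∩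
      {z | z ∈ AK ∧ -z ∈ AK}).Nonempty :=
  multifold_B_iff_general n K A hK i
end

section
/- Let K = K₁ × ⋯ × K_r be a product of regular closed convex cones Kᵢ ⊆ ℝ^{nᵢ}, and A = [A₁ ⋯ A_r] ∈ ℝ^{m×n}. For each i, the following are equivalent: (1) there exists y ∈ ℝᵐ with Aᵀy ∈ K₁* × ⋯ × K_r* and Aᵢᵀy ∈ int Kᵢ*; (2) Aᵢ(Kᵢ \ {0}) does not intersect the lineality space of the closure of AK. -/
/-!
If `y` is nonnegative on `AK` and `Aᵢᵀ y` is strictly positive on `Kᵢ \ {0}`, then `y` vanishes on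
the lineality space of `C = closure (AK)` but is positive on `Aᵢ (Kᵢ \ {0})`.

Conversely, if `Aᵢ (Kᵢ \ {0})` misses the lineality space of `C`, then `-Aᵢ v ∉ C` for every unit
vector `v ∈ Kᵢ`, so Farkas' lemma gives a functional that is nonnegative on `C` and positive at
`Aᵢ v`. By compactness of the unit sphere of `Kᵢ` finitely many of them suffice, and since
`Aᵢ Kᵢ ⊆ C` their sum `y` is positive on all of `Aᵢ (Kᵢ \ {0})`. Strict positivity on the compact
base of `Kᵢ` is an open condition, which puts `Aᵢᵀ y` in the interior of `Kᵢ*`.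
-/

open Matrix Set Filter Topology

section DotProductDual

variable {ι : Type*} [Fintype ι]

def dotProductDual (K : Set (ι → ℝ)) : Set (ι → ℝ) := {s | ∀ v ∈ K, 0 ≤ s ⬝ᵥ v}

lemma dotProductDual_closure (K : Set (ι → ℝ)) :
    dotProductDual (closure K) = dotProductDual K := by
  refine Subset.antisymm (fun s hs v hv => hs v (subset_closure hv)) fun s hs => ?_
  have hclosed : IsClosed {v : ι → ℝ | 0 ≤ s ⬝ᵥ v} :=
    isClosed_le continuous_const (continuous_const.dotProduct continuous_id)
  exact fun v hv => closure_minimal hs hclosed hv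

lemma dotProduct_pos_of_mem_interior_dotProductDual {K : Set (ι → ℝ)} {s v : ι → ℝ}
    (hs : s ∈ interior (dotProductDual K)) (hv : v ∈ K) (hv0 : v ≠ 0) : 0 < s ⬝ᵥ v := by
  have hlim : Tendsto (fun t : ℝ => s - t • v) (𝓝[>] 0) (𝓝 s) :=
    ((continuous_const.sub (continuous_id.smul continuous_const)).tendsto' 0 s
      (by simp)).mono_left nhdsWithin_le_nhds
  obtain ⟨t, hts, ht⟩ :=
    ((hlim.eventually (mem_interior_iff_mem_nhds.mp hs)).and self_mem_nhdsWithin).exists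
  have hvv : 0 < v ⬝ᵥ v := by simpa using dotProduct_star_self_pos_iff.2 hv0
  have := hts v hv
  rw [sub_dotProduct, smul_dotProduct, smul_eq_mul] at this
  nlinarith [mul_pos (mem_Ioi.mp ht) hvv]

lemma dotProduct_pos_of_pos_on_sphere {K : Set (ι → ℝ)}
    (hsmul : ∀ x ∈ K, ∀ t : ℝ, 0 ≤ t → t • x ∈ K) {s : ι → ℝ}
    (h : ∀ u ∈ K ∩ Metric.sphere 0 1, 0 < s ⬝ᵥ u) {v : ι → ℝ} (hv : v ∈ K) (hv0 : v ≠ 0) :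
    0 < s ⬝ᵥ v := by
  have hn : 0 < ‖v‖ := norm_pos_iff.2 hv0
  have hu : ‖v‖⁻¹ • v ∈ K ∩ Metric.sphere 0 1 :=
    ⟨hsmul v hv _ (inv_nonneg.2 hn.le), by simp [norm_smul, hn.ne']⟩
  have := h _ hu
  rw [dotProduct_smul, smul_eq_mul] at this
  exact pos_of_mul_pos_right this (inv_nonneg.2 hn.le)

lemma mem_interior_dotProductDual_of_pos {K : Set (ι → ℝ)} (hcl : IsClosed K)
    (hsmul : ∀ x ∈ K, ∀ t : ℝ, 0 ≤ t → t • x ∈ K) {s : ι → ℝ}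
    (h : ∀ v ∈ K, v ≠ 0 → 0 < s ⬝ᵥ v) : s ∈ interior (dotProductDual K) := by
  have hS : IsCompact (K ∩ Metric.sphere 0 1) := (isCompact_sphere 0 1).inter_left hcl
  have hev : ∀ᶠ s' in 𝓝 s, ∀ u ∈ K ∩ Metric.sphere 0 1, 0 < s' ⬝ᵥ u :=
    hS.eventually_forall_of_forall_eventually fun u hu =>
      continuousAt_const.eventually_lt (continuous_fst.dotProduct continuous_snd).continuousAt
        (h u hu.1 (by rintro rfl; simp at hu))
  refine mem_interior_iff_mem_nhds.2 (hev.mono fun s' hs' v hv => ?_)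
  rcases eq_or_ne v 0 with rfl | hv0
  · simp
  · exact (dotProduct_pos_of_pos_on_sphere hsmul hs' hv hv0).le

end DotProductDual

theorem ProperCone.exists_dual_pos_of_isCompact {E : Type*} [TopologicalSpace E] [AddCommGroup E]
    [IsTopologicalAddGroup E] [Module ℝ E] [ContinuousSMul ℝ E] [LocallyConvexSpace ℝ E]
    (C : ProperCone ℝ E) {S : Set E} (hS : IsCompact S) (hSC : S ⊆ C)
    (hneg : ∀ x ∈ S, -x ∉ C) :
    ∃ f : StrongDual ℝ E, (∀ x ∈ C, 0 ≤ f x) ∧ ∀ x ∈ S, 0 < f x := by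
  obtain ⟨f, hfC, hfS⟩ : ∃ f : StrongDual ℝ E, (∀ x ∈ C, 0 ≤ f x) ∧ ∀ x ∈ S, x ∈ C → 0 < f x := by
    refine hS.induction_on (p := fun T => ∃ f : StrongDual ℝ E, (∀ x ∈ C, 0 ≤ f x) ∧
      ∀ x ∈ T, x ∈ C → 0 < f x) ⟨0, by simp, by simp⟩ ?_ ?_ ?_
    · rintro T T' hTT' ⟨f, hfC, hfT'⟩
      exact ⟨f, hfC, fun x hx => hfT' x (hTT' hx)⟩
    · rintro T T' ⟨f, hfC, hfT⟩ ⟨g, hgC, hgT'⟩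
      refine ⟨f + g, fun x hx => add_nonneg (hfC x hx) (hgC x hx), ?_⟩
      rintro x (hx | hx) hxC
      · exact add_pos_of_pos_of_nonneg (hfT x hx hxC) (hgC x hxC)
      · exact add_pos_of_nonneg_of_pos (hfC x hxC) (hgT' x hx hxC)
    · intro x hx
      obtain ⟨f, hfC, hfx⟩ := C.hyperplane_separation_point (hneg x hx)
      have hopen : IsOpen {y | 0 < f y} := isOpen_lt continuous_const f.continuous
      exact ⟨_, mem_nhdsWithin_of_mem_nhds (hopen.mem_nhds (by simpa using hfx)), f, hfC,
        fun y hy _ => hy⟩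
  exact ⟨f, hfC, fun x hx => hfS x hx (hSC hx)⟩

def PointedCone.ofConvex {E : Type*} [AddCommGroup E] [Module ℝ E] (K : Set E) (h0 : (0 : E) ∈ K)
    (hconv : Convex ℝ K) (hsmul : ∀ x ∈ K, ∀ t : ℝ, 0 ≤ t → t • x ∈ K) : PointedCone ℝ E where
  carrier := K
  zero_mem' := h0
  add_mem' {x y} hx hy := by
    have hmid := hconv hx hy (by norm_num : (0 : ℝ) ≤ 1 / 2) (by norm_num : (0 : ℝ) ≤ 1 / 2)
      (by norm_num)
    convert hsmul _ hmid 2 zero_le_two using 1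
    module
  smul_mem' c x hx := hsmul x hx c c.2

section SumMulVec

variable {ι μ : Type*} [Fintype ι] {κ : ι → Type*} [∀ j, Fintype (κ j)]

def PointedCone.sumMulVec (K : ∀ j, PointedCone ℝ (κ j → ℝ)) (A : ∀ j, Matrix μ (κ j) ℝ) :
    PointedCone ℝ (μ → ℝ) where
  carrier := {z | ∃ x : ∀ j, κ j → ℝ, (∀ j, x j ∈ K j) ∧ z = ∑ j, A j *ᵥ x j}
  zero_mem' := ⟨0, fun j => zero_mem _, by simp⟩
  add_mem' := by
    rintro _ _ ⟨x, hx, rfl⟩ ⟨x', hx', rfl⟩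
    exact ⟨x + x', fun j => add_mem (hx j) (hx' j), by simp [mulVec_add, Finset.sum_add_distrib]⟩
  smul_mem' := by
    rintro c _ ⟨x, hx, rfl⟩
    exact ⟨c • x, fun j => Submodule.smul_mem _ c (hx j), by simp [Finset.smul_sum, mulVec_smul]⟩

lemma PointedCone.mulVec_mem_sumMulVec (K : ∀ j, PointedCone ℝ (κ j → ℝ))
    (A : ∀ j, Matrix μ (κ j) ℝ) {j : ι} {v : κ j → ℝ} (hv : v ∈ K j) :
    A j *ᵥ v ∈ sumMulVec K A := by
  classical
  refine ⟨Pi.single j v, fun j' => ?_, ?_⟩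
  · rcases eq_or_ne j' j with rfl | hj
    · simpa
    · simp [hj, zero_mem]
  · rw [Finset.sum_eq_single j (fun j' _ hj => by simp [hj]) (by simp), Pi.single_eq_same]

lemma PointedCone.mem_dotProductDual_closure_sumMulVec_iff [Fintype μ]
    (K : ∀ j, PointedCone ℝ (κ j → ℝ)) (A : ∀ j, Matrix μ (κ j) ℝ) (y : μ → ℝ) :
    y ∈ dotProductDual (closure (sumMulVec K A : Set (μ → ℝ))) ↔
      ∀ j, (A j)ᵀ *ᵥ y ∈ dotProductDual (K j : Set (κ j → ℝ)) := by
  rw [dotProductDual_closure]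
  refine ⟨fun hy j v hv => ?_, ?_⟩
  · simpa [mulVec_transpose, dotProduct_mulVec] using hy _ (mulVec_mem_sumMulVec K A hv)
  · rintro hy _ ⟨x, hx, rfl⟩
    rw [dotProduct_sum]
    exact Finset.sum_nonneg fun j _ => by
      simpa [mulVec_transpose, dotProduct_mulVec] using hy j (x j) (hx j)

end SumMulVec

theorem exists_mem_dotProductDual_transpose_mulVec_mem_interior_iff {ι μ : Type*} [Fintype ι]
    [Fintype μ] (C : ProperCone ℝ (μ → ℝ)) (B : Matrix μ ι ℝ) {K : Set (ι → ℝ)} (hcl : IsClosed K)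
    (hsmul : ∀ x ∈ K, ∀ t : ℝ, 0 ≤ t → t • x ∈ K) (hBK : ∀ v ∈ K, B *ᵥ v ∈ C) :
    (∃ y, y ∈ dotProductDual (C : Set (μ → ℝ)) ∧ Bᵀ *ᵥ y ∈ interior (dotProductDual K)) ↔
      (fun v => B *ᵥ v) '' (K \ {0}) ∩ {z | z ∈ C ∧ -z ∈ C} = ∅ := by
  have htranspose (y : μ → ℝ) (v : ι → ℝ) : (Bᵀ *ᵥ y) ⬝ᵥ v = y ⬝ᵥ (B *ᵥ v) := by
    rw [mulVec_transpose, dotProduct_mulVec]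
  constructor
  · rintro ⟨y, hyC, hyK⟩
    refine eq_empty_iff_forall_notMem.2 ?_
    rintro _ ⟨⟨v, ⟨hv, hv0⟩, rfl⟩, hz, hnz⟩
    have hpos := dotProduct_pos_of_mem_interior_dotProductDual hyK hv hv0
    have hneg := hyC _ hnz
    rw [htranspose] at hpos
    rw [dotProduct_neg] at hneg
    linarith
  · intro hlin
    have hS : IsCompact ((fun v => B *ᵥ v) '' (K ∩ Metric.sphere 0 1)) :=
      ((isCompact_sphere 0 1).inter_left hcl).image (continuous_const.matrix_mulVec continuous_id)
    have hneg : ∀ z ∈ (fun v => B *ᵥ v) '' (K ∩ Metric.sphere 0 1), -z ∉ C := by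
      rintro _ ⟨v, ⟨hv, hv1⟩, rfl⟩ hnz
      have hv0 : v ≠ 0 := by rintro rfl; simp at hv1
      exact (eq_empty_iff_forall_notMem.1 hlin) _ ⟨⟨v, ⟨hv, hv0⟩, rfl⟩, hBK v hv, hnz⟩
    obtain ⟨f, hfC, hfS⟩ := C.exists_dual_pos_of_isCompact hS
      (image_subset_iff.2 fun v hv => hBK v hv.1) hneg
    classical
    obtain ⟨y, hy⟩ := (dotProductEquiv ℝ μ).surjective f.toLinearMap
    have hfy (z : μ → ℝ) : f z = y ⬝ᵥ z := (LinearMap.congr_fun hy z).symm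
    refine ⟨y, fun z hz => hfy z ▸ hfC z hz, mem_interior_dotProductDual_of_pos hcl hsmul
      fun v hv hv0 => dotProduct_pos_of_pos_on_sphere hsmul (fun u hu => ?_) hv hv0⟩
    rw [htranspose, ← hfy]
    exact hfS _ ⟨u, hu, rfl⟩

theorem multifold_N_iff_general {r m : ℕ} (n : Fin r → ℕ)
    (K : ∀ i, Set (Fin (n i) → ℝ)) (A : ∀ i, Matrix (Fin m) (Fin (n i)) ℝ)
    (hK : ∀ i, IsClosed (K i) ∧ Convex ℝ (K i) ∧
      (∀ x ∈ K i, ∀ t : ℝ, 0 ≤ t → t • x ∈ K i) ∧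
      (∀ x ∈ K i, -x ∈ K i → x = 0) ∧ (interior (K i)).Nonempty)
    (i : Fin r) :
    let AK : Set (Fin m → ℝ) :=
      {z | ∃ x : ∀ j, Fin (n j) → ℝ, (∀ j, x j ∈ K j) ∧ z = ∑ j, (A j) *ᵥ x j}
    (∃ y : Fin m → ℝ,
        (∀ j, (A j)ᵀ *ᵥ y ∈ {s | ∀ v ∈ K j, 0 ≤ s ⬝ᵥ v}) ∧
        (A i)ᵀ *ᵥ y ∈ interior {s | ∀ v ∈ K i, 0 ≤ s ⬝ᵥ v}) ↔
    ((fun v => (A i) *ᵥ v) '' (K i \ {0}) ∩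
      {z | z ∈ closure AK ∧ -z ∈ closure AK}) = ∅ := by
  intro AK
  have hK0 (j : Fin r) : (0 : Fin (n j) → ℝ) ∈ K j := by
    obtain ⟨x, hx⟩ := (hK j).2.2.2.2
    simpa using (hK j).2.2.1 x (interior_subset hx) 0 le_rfl
  let Kc j := PointedCone.ofConvex (K j) (hK0 j) (hK j).2.1 (hK j).2.2.1
  let C : ProperCone ℝ (Fin m → ℝ) := ⟨(PointedCone.sumMulVec Kc A).closure, isClosed_closure⟩
  have hdual (y : Fin m → ℝ) : (∀ j, (A j)ᵀ *ᵥ y ∈ dotProductDual (K j)) ↔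
      y ∈ dotProductDual (C : Set (Fin m → ℝ)) :=
    (PointedCone.mem_dotProductDual_closure_sumMulVec_iff Kc A y).symm
  exact (exists_congr fun y => and_congr_left' (hdual y)).trans
    (exists_mem_dotProductDual_transpose_mulVec_mem_interior_iff C (A i) (hK i).1 (hK i).2.2.1
      fun v hv => subset_closure (PointedCone.mulVec_mem_sumMulVec Kc A hv))

/-- Characterization of the set `N` for multifold conic systems:
`i ∈ N` iff `Aᵢ(Kᵢ \ {0})` misses the lineality space of the closure of `AK`. -/
theorem multifold_N_iff {r m : ℕ} (n : Fin r → ℕ) (hn : ∀ i, 0 < n i)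
    (K : ∀ i, Set (Fin (n i) → ℝ)) (A : ∀ i, Matrix (Fin m) (Fin (n i)) ℝ)
    (hK : ∀ i, IsClosed (K i) ∧ Convex ℝ (K i) ∧
      (∀ x ∈ K i, ∀ t : ℝ, 0 ≤ t → t • x ∈ K i) ∧
      (∀ x ∈ K i, -x ∈ K i → x = 0) ∧ (interior (K i)).Nonempty)
    (i : Fin r) :
    let AK : Set (Fin m → ℝ) :=
      {z | ∃ x : ∀ j, Fin (n j) → ℝ, (∀ j, x j ∈ K j) ∧ z = ∑ j, (A j) *ᵥ x j}
    (∃ y : Fin m → ℝ,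
        (∀ j, (A j)ᵀ *ᵥ y ∈ {s | ∀ v ∈ K j, 0 ≤ s ⬝ᵥ v}) ∧
        (A i)ᵀ *ᵥ y ∈ interior {s | ∀ v ∈ K i, 0 ≤ s ⬝ᵥ v}) ↔
    ((fun v => (A i) *ᵥ v) '' (K i \ {0}) ∩
      {z | z ∈ closure AK ∧ -z ∈ closure AK}) = ∅ :=
  multifold_N_iff_general n K A hK i
end

section
/- Let K = K₁ × ⋯ × K_r be a product of regular closed convex cones and A = [A₁ ⋯ A_r]. For each i, the following are equivalent: (1) every y with Aᵀy ∈ K* satisfies Aᵢᵀy = 0; (2) the relative interior of AᵢKᵢ intersects the lineality space of the closure of AK; (3) AᵢKᵢ is contained in Lin(closure(AK)). -/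
/-!
Everything happens in the closed convex cone `D = cl(AK)`, whose lineality space `L = D ∩ -D` is a
face of `D`. A convex subset of `D` with a relative-interior point in a face lies in that face: each
of its points `w` can be pushed slightly beyond that point `z` inside the set, and then a positive
multiple of `z` is a positive combination of `w` and a point of `D`. This gives (2) ⇔ (3).
By Farkas' lemma, a point of `D` lies in `L` iff every `y` in the dual cone of `AK` vanishes on
it, and `Aᵢᵀ y = 0` iff `y` vanishes on `AᵢKᵢ` because `Kᵢ` spans the space. This gives (1) ⇔ (3).
-/

open Matrix Set

theorem exists_pos_add_smul_sub_mem_of_mem_intrinsicInterior {E : Type*} [AddCommGroup E]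
    [TopologicalSpace E] [ContinuousAdd E] [Module ℝ E] [ContinuousSMul ℝ E] {s : Set E} {x y : E}
    (hx : x ∈ intrinsicInterior ℝ s) (hy : y ∈ s) : ∃ t : ℝ, 0 < t ∧ x + t • (x - y) ∈ s := by
  obtain ⟨x', hx', rfl⟩ := mem_intrinsicInterior.mp hx
  have hdir : ↑x' - y ∈ (affineSpan ℝ s).direction :=
    AffineSubspace.vsub_mem_direction x'.2 (subset_affineSpan ℝ s hy)
  have hline (t : ℝ) : ↑x' + t • (↑x' - y) ∈ affineSpan ℝ s := by
    simpa [vadd_eq_add, add_comm] using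
      AffineSubspace.vadd_mem_of_mem_direction (Submodule.smul_mem _ t hdir) x'.2
  let c : ℝ → affineSpan ℝ s := fun t => ⟨x' + t • (x' - y), hline t⟩
  have hc : Continuous c := by fun_prop
  have hc0 : c 0 = x' := by ext; simp [c]
  have hnhds : ∀ᶠ t in nhds (0 : ℝ), c t ∈ ((↑) ⁻¹' s : Set (affineSpan ℝ s)) :=
    hc.continuousAt.preimage_mem_nhds (hc0 ▸ mem_interior_iff_mem_nhds.mp hx')
  obtain ⟨t, ht, hts⟩ :=
    ((hnhds.filter_mono nhdsWithin_le_nhds).and (eventually_mem_nhdsWithin (s := Ioi 0))).exists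
  exact ⟨t, hts, ht⟩

namespace PointedCone

theorem IsFaceOf.subset_of_intrinsicInterior_inter_nonempty {E : Type*} [AddCommGroup E]
    [TopologicalSpace E] [ContinuousAdd E] [Module ℝ E] [ContinuousSMul ℝ E]
    {F C : PointedCone ℝ E} (hF : F.IsFaceOf C) {s : Set E} (hsC : s ⊆ C)
    (hs : (intrinsicInterior ℝ s ∩ F).Nonempty) : s ⊆ F := by
  obtain ⟨z, hzs, hzF⟩ := hs
  intro w hw
  obtain ⟨t, ht, hu⟩ := exists_pos_add_smul_sub_mem_of_mem_intrinsicInterior hzs hw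
  refine hF.mem_of_smul_add_mem (hsC hw) (hsC hu) ht ?_
  convert F.smul_mem (by positivity : (0 : ℝ) ≤ 1 + t) hzF using 1
  module

theorem IsFaceOf.intrinsicInterior_inter_nonempty_iff {E : Type*} [NormedAddCommGroup E]
    [NormedSpace ℝ E] [FiniteDimensional ℝ E] {F C : PointedCone ℝ E} (hF : F.IsFaceOf C)
    {s : Set E} (hs : Convex ℝ s) (hne : s.Nonempty) (hsC : s ⊆ C) :
    (intrinsicInterior ℝ s ∩ F).Nonempty ↔ s ⊆ F := by
  refine ⟨hF.subset_of_intrinsicInterior_inter_nonempty hsC, fun hsF => ?_⟩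
  obtain ⟨z, hz⟩ := hne.intrinsicInterior hs
  exact ⟨z, hz, hsF (intrinsicInterior_subset hz)⟩

variable {E : Type*} [AddCommGroup E] [TopologicalSpace E] [IsTopologicalAddGroup E] [Module ℝ E]
  [ContinuousSMul ℝ E]

theorem mem_lineal_closure_iff [LocallyConvexSpace ℝ E] {C : PointedCone ℝ E} {x : E}
    (hx : x ∈ closure (C : Set E)) :
    x ∈ C.closure.lineal ↔ ∀ f : StrongDual ℝ E, (∀ c ∈ C, 0 ≤ f c) → f x = 0 := by
  have nonneg_on_closure (f : StrongDual ℝ E) (hf : ∀ c ∈ C, 0 ≤ f c) :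
      ∀ z ∈ closure (C : Set E), 0 ≤ f z :=
    fun z hz => closure_minimal hf (isClosed_le continuous_const f.continuous) hz
  refine ⟨fun hxL f hf => ?_, fun h => ⟨hx, ?_⟩⟩
  · have := nonneg_on_closure f hf _ hxL.2
    rw [map_neg] at this
    exact le_antisymm (by linarith) (nonneg_on_closure f hf x hx)
  · by_contra hneg
    obtain ⟨f, hf, hfx⟩ := ProperCone.hyperplane_separation_point (Submodule.closure C) hneg
    have := h f fun c hc => hf c (subset_closure hc)
    simp [this] at hfx

end PointedCone

section DotProduct

variable {ι : Type*} [Fintype ι] [DecidableEq ι]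

theorem PointedCone.mem_lineal_closure_iff_dotProduct {C : PointedCone ℝ (ι → ℝ)} {x : ι → ℝ}
    (hx : x ∈ closure (C : Set (ι → ℝ))) :
    x ∈ C.closure.lineal ↔ ∀ y : ι → ℝ, (∀ c ∈ C, 0 ≤ y ⬝ᵥ c) → y ⬝ᵥ x = 0 := by
  rw [C.mem_lineal_closure_iff hx]
  exact ((dotProductEquiv ℝ ι).trans LinearMap.toContinuousLinearMap).forall_congr_right.symm

theorem eq_zero_of_forall_dotProduct_eq_zero {s : Set (ι → ℝ)} (hs : (interior s).Nonempty)
    {w : ι → ℝ} (hw : ∀ v ∈ s, w ⬝ᵥ v = 0) : w = 0 := by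
  have hspan : Submodule.span ℝ s = ⊤ := (Submodule.span ℝ s).eq_top_of_nonempty_interior'
    (hs.mono (interior_mono Submodule.subset_span))
  apply (dotProductEquiv ℝ ι).injective
  rw [map_zero]
  exact LinearMap.ext_on hspan fun v hv => hw v hv

theorem transpose_mulVec_dotProduct {α m n : Type*} [CommSemiring α] [Fintype m] [Fintype n]
    (A : Matrix m n α) (y : m → α) (v : n → α) : Aᵀ *ᵥ y ⬝ᵥ v = y ⬝ᵥ A *ᵥ v := by
  rw [mulVec_transpose, dotProduct_mulVec]

end DotProduct

def Convex.toPointedCone {E : Type*} [AddCommGroup E] [Module ℝ E] {s : Set E} (hs : Convex ℝ s)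
    (hsmul : ∀ x ∈ s, ∀ t : ℝ, 0 ≤ t → t • x ∈ s) (hne : s.Nonempty) : PointedCone ℝ E where
  carrier := s
  zero_mem' := by simpa using hsmul _ hne.some_mem 0 le_rfl
  add_mem' {x y} hx hy := by
    convert hsmul _ (hs hx hy (a := 1 / 2) (b := 1 / 2) (by norm_num) (by norm_num) (by norm_num)) 2
      (by norm_num) using 1
    module
  smul_mem' c x hx := hsmul x hx c c.2

namespace PointedCone

variable {ι m : Type*} [Fintype ι] {n : ι → Type*} [∀ j, Fintype (n j)]

/-- The cone `A K = {∑ⱼ Aⱼ xⱼ | xⱼ ∈ Kⱼ}` of the block matrix `A = [A₁ ⋯ A_r]` on the product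
cone `K = K₁ × ⋯ × K_r`. -/
def blockMulVec (K : ∀ j, PointedCone ℝ (n j → ℝ)) (A : ∀ j, Matrix m (n j) ℝ) :
    PointedCone ℝ (m → ℝ) :=
  (Submodule.pi univ K).map (∑ j, (A j).mulVecLin ∘ₗ LinearMap.proj j)

variable {K : ∀ j, PointedCone ℝ (n j → ℝ)} {A : ∀ j, Matrix m (n j) ℝ}

theorem mem_blockMulVec {z : m → ℝ} :
    z ∈ blockMulVec K A ↔ ∃ x : ∀ j, n j → ℝ, (∀ j, x j ∈ K j) ∧ z = ∑ j, A j *ᵥ x j := by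
  simp [blockMulVec, eq_comm]

theorem mulVec_mem_blockMulVec [DecidableEq ι] {j : ι} {v : n j → ℝ} (hv : v ∈ K j) :
    A j *ᵥ v ∈ blockMulVec K A := by
  refine mem_blockMulVec.mpr ⟨Pi.single j v, fun k => ?_, ?_⟩
  · rcases eq_or_ne k j with rfl | hk
    · simpa using hv
    · simp [Pi.single_eq_of_ne hk]
  · rw [Finset.sum_eq_single j (fun k _ hk => by simp [Pi.single_eq_of_ne hk]) (by simp)]
    simp

theorem forall_dotProduct_nonneg_blockMulVec_iff [Fintype m] [DecidableEq ι] {y : m → ℝ} :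
    (∀ c ∈ blockMulVec K A, 0 ≤ y ⬝ᵥ c) ↔ ∀ j, ∀ v ∈ K j, 0 ≤ (A j)ᵀ *ᵥ y ⬝ᵥ v := by
  simp_rw [transpose_mulVec_dotProduct]
  refine ⟨fun h j v hv => h _ (mulVec_mem_blockMulVec hv), fun h c hc => ?_⟩
  obtain ⟨x, hx, rfl⟩ := mem_blockMulVec.mp hc
  rw [dotProduct_sum]
  exact Finset.sum_nonneg fun j _ => h j (x j) (hx j)

theorem image_mulVec_subset_lineal_closure_blockMulVec_iff [Fintype m] [DecidableEq ι]
    [DecidableEq m] {i : ι} [DecidableEq (n i)] (hKi : (interior (K i : Set (n i → ℝ))).Nonempty) :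
    (A i *ᵥ ·) '' K i ⊆ (blockMulVec K A).closure.lineal ↔
      ∀ y : m → ℝ, (∀ j, ∀ v ∈ K j, 0 ≤ (A j)ᵀ *ᵥ y ⬝ᵥ v) → (A i)ᵀ *ᵥ y = 0 := by
  have mem_closure {v} (hv : v ∈ K i) : A i *ᵥ v ∈ closure (blockMulVec K A : Set (m → ℝ)) :=
    subset_closure (mulVec_mem_blockMulVec hv)
  have transpose_eq_zero_iff (y : m → ℝ) :
      (A i)ᵀ *ᵥ y = 0 ↔ ∀ v ∈ K i, y ⬝ᵥ A i *ᵥ v = 0 := by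
    simp_rw [← transpose_mulVec_dotProduct]
    exact ⟨fun h v _ => by rw [h, zero_dotProduct], eq_zero_of_forall_dotProduct_eq_zero hKi⟩
  simp_rw [← forall_dotProduct_nonneg_blockMulVec_iff, transpose_eq_zero_iff]
  constructor
  · intro h y hy v hv
    exact (mem_lineal_closure_iff_dotProduct (mem_closure hv)).mp (h ⟨v, hv, rfl⟩) y hy
  · rintro h _ ⟨v, hv, rfl⟩
    exact (mem_lineal_closure_iff_dotProduct (mem_closure hv)).mpr fun y hy => h y hy v hv

end PointedCone

theorem multifold_B0_iff_general {r m : ℕ} (n : Fin r → ℕ)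
    (K : ∀ i, Set (Fin (n i) → ℝ)) (A : ∀ i, Matrix (Fin m) (Fin (n i)) ℝ)
    (hK : ∀ i, IsClosed (K i) ∧ Convex ℝ (K i) ∧
      (∀ x ∈ K i, ∀ t : ℝ, 0 ≤ t → t • x ∈ K i) ∧
      (∀ x ∈ K i, -x ∈ K i → x = 0) ∧ (interior (K i)).Nonempty)
    (i : Fin r) :
    let AK : Set (Fin m → ℝ) :=
      {z | ∃ x : ∀ j, Fin (n j) → ℝ, (∀ j, x j ∈ K j) ∧ z = ∑ j, (A j) *ᵥ x j}
    let L : Set (Fin m → ℝ) := {z | z ∈ closure AK ∧ -z ∈ closure AK}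
    ((∀ y : Fin m → ℝ,
        (∀ j, (A j)ᵀ *ᵥ y ∈ {s | ∀ v ∈ K j, 0 ≤ s ⬝ᵥ v}) → (A i)ᵀ *ᵥ y = 0) ↔
      (intrinsicInterior ℝ ((fun v => (A i) *ᵥ v) '' K i) ∩ L).Nonempty) ∧
    ((intrinsicInterior ℝ ((fun v => (A i) *ᵥ v) '' K i) ∩ L).Nonempty ↔
      (fun v => (A i) *ᵥ v) '' K i ⊆ L) := by
  intro AK L
  have hconv j := (hK j).2.1
  have hne j : (K j).Nonempty := (hK j).2.2.2.2.mono interior_subset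
  let cone j : PointedCone ℝ (Fin (n j) → ℝ) := (hconv j).toPointedCone (hK j).2.2.1 (hne j)
  let C := PointedCone.blockMulVec cone A
  have hL : L = C.closure.lineal := by
    have hAK : AK = C := by ext; exact (PointedCone.mem_blockMulVec (K := cone) (A := A)).symm
    ext; simp [L, hAK]
  have hdual := PointedCone.image_mulVec_subset_lineal_closure_blockMulVec_iff (K := cone) (A := A)
    (hK i).2.2.2.2
  have hface := (PointedCone.IsFaceOf.lineal C.closure).intrinsicInterior_inter_nonempty_iff
    ((hconv i).linear_image (A i).mulVecLin) ((hne i).image _)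
    (fun _ ⟨v, hv, hz⟩ => hz ▸ subset_closure (PointedCone.mulVec_mem_blockMulVec (K := cone) hv))
  rw [hL]
  exact ⟨hdual.symm.trans hface.symm, hface⟩

/-- Characterization of the set `B₀` for multifold conic systems: `i ∈ B₀` iff
`ri (AᵢKᵢ)` meets `Lin(closure AK)`, iff `AᵢKᵢ ⊆ Lin(closure AK)`. -/
theorem multifold_B0_iff {r m : ℕ} (n : Fin r → ℕ) (hn : ∀ i, 0 < n i)
    (K : ∀ i, Set (Fin (n i) → ℝ)) (A : ∀ i, Matrix (Fin m) (Fin (n i)) ℝ)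
    (hK : ∀ i, IsClosed (K i) ∧ Convex ℝ (K i) ∧
      (∀ x ∈ K i, ∀ t : ℝ, 0 ≤ t → t • x ∈ K i) ∧
      (∀ x ∈ K i, -x ∈ K i → x = 0) ∧ (interior (K i)).Nonempty)
    (i : Fin r) :
    let AK : Set (Fin m → ℝ) :=
      {z | ∃ x : ∀ j, Fin (n j) → ℝ, (∀ j, x j ∈ K j) ∧ z = ∑ j, (A j) *ᵥ x j}
    let L : Set (Fin m → ℝ) := {z | z ∈ closure AK ∧ -z ∈ closure AK}
    ((∀ y : Fin m → ℝ,
        (∀ j, (A j)ᵀ *ᵥ y ∈ {s | ∀ v ∈ K j, 0 ≤ s ⬝ᵥ v}) → (A i)ᵀ *ᵥ y = 0) ↔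
      (intrinsicInterior ℝ ((fun v => (A i) *ᵥ v) '' K i) ∩ L).Nonempty) ∧
    ((intrinsicInterior ℝ ((fun v => (A i) *ᵥ v) '' K i) ∩ L).Nonempty ↔
      (fun v => (A i) *ᵥ v) '' K i ⊆ L) :=
  multifold_B0_iff_general n K A hK i
end

section
/- Let K = K₁ × ⋯ × K_r be a product of regular closed convex cones and A = [A₁ ⋯ A_r]. For each i, the following are equivalent: (1) every x ∈ K with Ax = 0 satisfies xᵢ = 0; (2) Aᵢ(Kᵢ \ {0}) ∩ Lin(AK) = ∅. -/
/-!
Only the additive structure of the cones matters. If `Aᵢ v` with `0 ≠ v ∈ Kᵢ` lies in `Lin(AK)`,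
write `-Aᵢ v = A y` with `y ∈ K`; then `y + v eᵢ ∈ K` is a kernel element whose `i`-th block
`yᵢ + v` must vanish, so `v, -v ∈ Kᵢ`, contradicting pointedness. Conversely, if `Ax = 0` with
`x ∈ K`, then `Aᵢ xᵢ ∈ AK` and `-Aᵢ xᵢ = A x'` where `x'` is `x` with block `i` set to zero.
-/

open Matrix

theorem Function.update_zero_add_single {ι : Type*} [DecidableEq ι] {E : ι → Type*}
    [∀ j, AddZeroClass (E j)] (x : ∀ j, E j) (i : ι) :
    Function.update x i 0 + Pi.single i (x i) = x := by
  ext j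
  by_cases hj : j = i
  · subst hj; simp
  · simp [hj]

namespace AddMonoidHom

variable {ι F : Type*} [Fintype ι] {E : ι → Type*} [∀ j, AddCommMonoid (E j)] [AddCommMonoid F]

def piSum (f : ∀ j, E j →+ F) : (∀ j, E j) →+ F :=
  ∑ j, (f j).comp (Pi.evalAddMonoidHom E j)

theorem piSum_apply (f : ∀ j, E j →+ F) (x : ∀ j, E j) : piSum f x = ∑ j, f j (x j) := by
  simp [piSum]

theorem piSum_single [DecidableEq ι] (f : ∀ j, E j →+ F) (i : ι) (v : E i) :
    piSum f (Pi.single i v) = f i v := by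
  rw [piSum_apply, Finset.sum_eq_single i (fun j _ hj => by simp [hj]) (by simp)]
  simp

end AddMonoidHom

namespace AddSubmonoid

open AddMonoidHom

variable {ι F : Type*} [Fintype ι] {E : ι → Type*}

theorem mem_map_piSum_pi [∀ j, AddCommMonoid (E j)] [AddCommMonoid F]
    {C : ∀ j, AddSubmonoid (E j)} {f : ∀ j, E j →+ F} {z : F} :
    z ∈ (pi Set.univ C).map (piSum f) ↔ ∃ x : ∀ j, E j, (∀ j, x j ∈ C j) ∧ z = ∑ j, f j (x j) := by
  simp [mem_pi, piSum_apply, eq_comm]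

theorem forall_piSum_eq_zero_imp_eq_zero_iff [DecidableEq ι] [∀ j, AddCommGroup (E j)]
    [AddCommGroup F] (C : ∀ j, AddSubmonoid (E j))
    (f : ∀ j, E j →+ F) {i : ι} (hC : (C i).IsPointed) :
    (∀ x ∈ pi Set.univ C, piSum f x = 0 → x i = 0) ↔
      ∀ v ∈ C i, f i v ∈ ((pi Set.univ C).map (piSum f)).support → v = 0 := by
  constructor
  · rintro h v hv ⟨-, y, hy, hyv⟩
    have hw : y + Pi.single i v ∈ pi Set.univ C :=
      add_mem hy ((single_mem_pi i v).2 fun _ => hv)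
    have hyi : y i + v = 0 := by
      simpa using h _ hw (by rw [map_add, hyv, piSum_single, neg_add_cancel])
    exact hC v hv (by rw [← eq_neg_of_add_eq_zero_left hyi]; exact hy i trivial)
  · intro h x hx hx0
    have hupdate : Function.update x i 0 ∈ pi Set.univ C := by
      intro j _
      by_cases hj : j = i
      · subst hj; simp
      · simpa [hj] using hx j trivial
    refine h (x i) (hx i trivial)
      ⟨⟨_, (single_mem_pi i _).2 fun _ => hx i trivial, piSum_single f i _⟩, _, hupdate, ?_⟩
    rw [← Function.update_zero_add_single x i, map_add, piSum_single] at hx0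
    exact eq_neg_of_add_eq_zero_left hx0

end AddSubmonoid

def Convex.toAddSubmonoid {E : Type*} [AddCommGroup E] [Module ℝ E] {s : Set E}
    (hs : Convex ℝ s) (hsmul : ∀ x ∈ s, ∀ t : ℝ, 0 ≤ t → t • x ∈ s) (hne : s.Nonempty) :
    AddSubmonoid E where
  carrier := s
  zero_mem' := by
    obtain ⟨x, hx⟩ := hne
    simpa using hsmul x hx 0 le_rfl
  add_mem' {x y} hx hy := by
    have hmid := hsmul _ (hs hx hy (by norm_num : (0:ℝ) ≤ 1/2) (by norm_num : (0:ℝ) ≤ 1/2)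
      (by norm_num)) 2 (by norm_num)
    rwa [show (2:ℝ) • ((1/2 : ℝ) • x + (1/2 : ℝ) • y) = x + y by module] at hmid

theorem Set.image_diff_singleton_inter_eq_empty_iff {α β : Type*} (g : α → β) (s : Set α)
    (a : α) (t : Set β) : g '' (s \ {a}) ∩ t = ∅ ↔ ∀ v ∈ s, g v ∈ t → v = a := by
  simp only [Set.eq_empty_iff_forall_notMem, Set.mem_inter_iff, Set.mem_image, Set.mem_sdiff,
    Set.mem_singleton_iff]
  grind

open AddSubmonoid AddMonoidHom in
theorem multifold_N0_iff_general {r m : ℕ} (n : Fin r → ℕ)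
    (K : ∀ i, Set (Fin (n i) → ℝ)) (A : ∀ i, Matrix (Fin m) (Fin (n i)) ℝ)
    (hK : ∀ i, IsClosed (K i) ∧ Convex ℝ (K i) ∧
      (∀ x ∈ K i, ∀ t : ℝ, 0 ≤ t → t • x ∈ K i) ∧
      (∀ x ∈ K i, -x ∈ K i → x = 0) ∧ (interior (K i)).Nonempty)
    (i : Fin r) :
    let AK : Set (Fin m → ℝ) :=
      {z | ∃ x : ∀ j, Fin (n j) → ℝ, (∀ j, x j ∈ K j) ∧ z = ∑ j, (A j) *ᵥ x j}
    (∀ x : ∀ j, Fin (n j) → ℝ,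
        (∀ j, x j ∈ K j) → (∑ j, (A j) *ᵥ x j) = 0 → x i = 0) ↔
    ((fun v => (A i) *ᵥ v) '' (K i \ {0}) ∩ {z | z ∈ AK ∧ -z ∈ AK}) = ∅ := by
  intro AK
  let C j := (hK j).2.1.toAddSubmonoid (hK j).2.2.1 ((hK j).2.2.2.2.mono interior_subset)
  let f j := (A j).mulVecLin.toAddMonoidHom
  have key := forall_piSum_eq_zero_imp_eq_zero_iff C f (hK i).2.2.2.1
  have hAK : ∀ z, z ∈ AK ↔ z ∈ (pi Set.univ C).map (piSum f) :=
    fun z => (mem_map_piSum_pi (C := C) (f := f)).symm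
  simp only [mem_pi, Set.mem_univ, true_imp_iff, piSum_apply, mem_support, ← hAK] at key
  rw [Set.image_diff_singleton_inter_eq_empty_iff]
  exact key

/-- Characterization of the set `N₀` for multifold conic systems: `i ∈ N₀` iff
`Aᵢ(Kᵢ \ {0})` misses the lineality space of `AK`. -/
theorem multifold_N0_iff {r m : ℕ} (n : Fin r → ℕ) (hn : ∀ i, 0 < n i)
    (K : ∀ i, Set (Fin (n i) → ℝ)) (A : ∀ i, Matrix (Fin m) (Fin (n i)) ℝ)
    (hK : ∀ i, IsClosed (K i) ∧ Convex ℝ (K i) ∧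
      (∀ x ∈ K i, ∀ t : ℝ, 0 ≤ t → t • x ∈ K i) ∧
      (∀ x ∈ K i, -x ∈ K i → x = 0) ∧ (interior (K i)).Nonempty)
    (i : Fin r) :
    let AK : Set (Fin m → ℝ) :=
      {z | ∃ x : ∀ j, Fin (n j) → ℝ, (∀ j, x j ∈ K j) ∧ z = ∑ j, (A j) *ᵥ x j}
    (∀ x : ∀ j, Fin (n j) → ℝ,
        (∀ j, x j ∈ K j) → (∑ j, (A j) *ᵥ x j) = 0 → x i = 0) ↔
    ((fun v => (A i) *ᵥ v) '' (K i \ {0}) ∩ {z | z ∈ AK ∧ -z ∈ AK}) = ∅ :=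
  multifold_N0_iff_general n K A hK i
end
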